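/- arXiv:1307.6674 — 5 statements merged into one kernel-verified Lean document; each statement's English description precedes it below -/
import Mathlib

section
/- For every real L > 1/2, one has ∫₀^∞ (1/((1+x)^L − 1)) · (√x/(1+x)) dx = 2 ∫₀^∞ (1/((1+x²)^L − 1)) · (x²/(1+x²)) dx = (√π/2) Σ_{n=1}^∞ Γ(Ln − 1/2)/Γ(Ln + 1); in particular all these quantities are finite. -/
open MeasureTheory

open Set Real


lemma betaReal_Ioo {a b : ℝ} (ha : 0 < a) (hb : 0 < b) :
    IntegrableOn (fun t : ℝ => t ^ (a-1) * (1-t) ^ (b-1)) (Ioo 0 1) ∧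
    ∫ t in Ioo (0:ℝ) 1, t ^ (a-1) * (1-t) ^ (b-1)
      = Real.Gamma a * Real.Gamma b / Real.Gamma (a+b) := by
  have ha' : 0 < (a:ℂ).re := by simpa using ha
  have hb' : 0 < (b:ℂ).re := by simpa using hb
  have hc : ∀ t ∈ Ioo (0:ℝ) 1,
      ((t:ℂ) ^ ((a:ℂ)-1) * ((1:ℂ)-(t:ℂ)) ^ ((b:ℂ)-1))
        = ((t ^ (a-1) * (1-t) ^ (b-1) : ℝ) : ℂ) := by
    intro t ht
    have h1 : ((t:ℂ)) ^ ((a:ℂ)-1) = ((t ^ (a-1) : ℝ) : ℂ) := by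
      rw [show ((a:ℂ)-1) = (((a-1 : ℝ)) : ℂ) by push_cast; ring,
        Complex.ofReal_cpow ht.1.le]
    have h2 : ((1:ℂ)-(t:ℂ)) ^ ((b:ℂ)-1) = (((1-t) ^ (b-1) : ℝ) : ℂ) := by
      rw [show ((1:ℂ)-(t:ℂ)) = (((1-t : ℝ)) : ℂ) by push_cast; ring,
        show ((b:ℂ)-1) = (((b-1 : ℝ)) : ℂ) by push_cast; ring,
        Complex.ofReal_cpow (by linarith [ht.2] : (0:ℝ) ≤ 1 - t)]
    rw [h1, h2]; push_cast; ring
  have hConv := Complex.betaIntegral_convergent ha' hb'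
  have hIoc : IntegrableOn (fun t : ℝ => (t:ℂ) ^ ((a:ℂ)-1) * ((1:ℂ)-(t:ℂ)) ^ ((b:ℂ)-1))
      (Ioc 0 1) := by
    rwa [intervalIntegrable_iff_integrableOn_Ioc_of_le zero_le_one] at hConv
  have hIoo := hIoc.mono_set Ioo_subset_Ioc_self
  have hIooR : IntegrableOn (fun t : ℝ => ((t ^ (a-1) * (1-t) ^ (b-1) : ℝ) : ℂ)) (Ioo 0 1) :=
    (integrableOn_congr_fun hc measurableSet_Ioo).mp hIoo
  have hInt : IntegrableOn (fun t : ℝ => t ^ (a-1) * (1-t) ^ (b-1)) (Ioo 0 1) := by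
    have := hIooR.re
    simp at this; exact this
  refine ⟨hInt, ?_⟩
  have hGamma := Complex.Gamma_mul_Gamma_eq_betaIntegral ha' hb'
  have hbeta : Complex.betaIntegral (a:ℂ) (b:ℂ)
      = ((∫ t in Ioo (0:ℝ) 1, t ^ (a-1) * (1-t) ^ (b-1) : ℝ) : ℂ) := by
    rw [Complex.betaIntegral, intervalIntegral.integral_of_le zero_le_one,
      integral_Ioc_eq_integral_Ioo, setIntegral_congr_fun measurableSet_Ioo hc]
    exact integral_ofReal
  rw [hbeta, ← Complex.ofReal_add, Complex.Gamma_ofReal, Complex.Gamma_ofReal,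
    Complex.Gamma_ofReal] at hGamma
  have hR : Real.Gamma a * Real.Gamma b
      = Real.Gamma (a+b) * ∫ t in Ioo (0:ℝ) 1, t ^ (a-1) * (1-t) ^ (b-1) := by
    exact_mod_cast hGamma
  rw [eq_div_iff (Real.Gamma_pos_of_pos (by linarith)).ne']
  linarith

lemma betaIoi {a b : ℝ} (ha : 0 < a) (hb : 0 < b) :
    IntegrableOn (fun x : ℝ => x ^ (a-1) * (1+x) ^ (-(a+b))) (Ioi 0) ∧
    ∫ x in Ioi (0:ℝ), x ^ (a-1) * (1+x) ^ (-(a+b))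
      = Real.Gamma a * Real.Gamma b / Real.Gamma (a+b) := by
  set φ : ℝ → ℝ := fun t => t / (1 - t) with hφ
  have hderiv : ∀ t ∈ Ioo (0:ℝ) 1,
      HasDerivWithinAt φ (((1-t)^2)⁻¹) (Ioo 0 1) t := by
    intro t ht
    have hne : (1 : ℝ) - t ≠ 0 := by have := ht.2; intro h; linarith [ht.2]
    have h := (hasDerivAt_id t).div ((hasDerivAt_id t).const_sub 1) hne
    have heq : (1 * (1 - id t) - id t * -1) / (1 - id t) ^ 2 = ((1-t)^2)⁻¹ := by
      simp only [id]; field_simp; ring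
    rw [heq] at h
    exact h.hasDerivWithinAt
  have hinj : InjOn φ (Ioo 0 1) := by
    intro t ht s hs h
    have h1 : (1:ℝ) - t ≠ 0 := by intro h'; linarith [ht.2]
    have h2 : (1:ℝ) - s ≠ 0 := by intro h'; linarith [hs.2]
    simp only [hφ] at h; field_simp at h
    linarith
  have himg : φ '' (Ioo 0 1) = Ioi 0 := by
    ext x
    constructor
    · rintro ⟨t, ht, rfl⟩
      exact div_pos ht.1 (by linarith [ht.2])
    · intro hx
      refine ⟨x / (1 + x), ⟨div_pos hx (by linarith [mem_Ioi.mp hx]), ?_⟩, ?_⟩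
      · rw [div_lt_one (by linarith [mem_Ioi.mp hx])]; linarith [mem_Ioi.mp hx]
      · have hx' : (0:ℝ) < x := hx
        simp only [hφ]
        rw [show (1 : ℝ) - x / (1 + x) = 1 / (1 + x) by field_simp; ring]
        field_simp
  set g : ℝ → ℝ := fun x => x ^ (a-1) * (1+x) ^ (-(a+b)) with hg
  have hcalc : ∀ t ∈ Ioo (0:ℝ) 1,
      |((1-t)^2)⁻¹| • g (φ t) = t ^ (a-1) * (1-t) ^ (b-1) := by
    intro t ht
    have ht0 : 0 < t := ht.1
    have hu : 0 < 1 - t := by linarith [ht.2]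
    have h1 : 1 + φ t = (1-t)⁻¹ := by
      simp only [hφ]; field_simp; ring
    have e1 : ((1-t)^2)⁻¹ = (1-t) ^ (-2 : ℝ) := by
      rw [← Real.rpow_natCast (1-t) 2, ← Real.rpow_neg hu.le]; norm_num
    simp only [hg, hφ, smul_eq_mul]
    rw [show 1 + t / (1 - t) = (1-t)⁻¹ by field_simp; ring,
      Real.div_rpow ht0.le hu.le, ← Real.rpow_neg_one (1-t), ← Real.rpow_mul hu.le,
      abs_of_pos (by positivity : (0:ℝ) < ((1-t)^2)⁻¹), e1,
      div_eq_mul_inv, ← Real.rpow_neg hu.le]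
    calc (1-t)^(-2:ℝ) * (t^(a-1) * ((1-t)^(-(a-1))) * ((1-t)^((-1:ℝ)*(-(a+b)))))
        = t^(a-1) * ((1-t)^(-2:ℝ) * ((1-t)^(-(a-1)) * (1-t)^((-1:ℝ)*(-(a+b))))) := by ring
      _ = t^(a-1) * (1-t)^(-2 + (-(a-1) + (-1:ℝ)*(-(a+b)))) := by
          rw [← Real.rpow_add hu, ← Real.rpow_add hu]
      _ = t^(a-1) * (1-t)^(b-1) := by
          rw [show (-2 + (-(a-1) + (-1:ℝ)*(-(a+b)))) = b - 1 by ring]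
  have hkey := integral_image_eq_integral_abs_deriv_smul measurableSet_Ioo hderiv hinj g
  have hkey2 := integrableOn_image_iff_integrableOn_abs_deriv_smul measurableSet_Ioo hderiv hinj g
  rw [himg] at hkey hkey2
  obtain ⟨hBint, hBval⟩ := betaReal_Ioo ha hb
  constructor
  · rw [hkey2]
    exact (integrableOn_congr_fun hcalc measurableSet_Ioo).mpr hBint
  · rw [hkey, setIntegral_congr_fun measurableSet_Ioo hcalc, hBval]

theorem integral_identities (L : ℝ) (hL : 1/2 < L) :
    IntegrableOn (fun x : ℝ => 1 / ((1 + x) ^ L - 1) * (Real.sqrt x / (1 + x)))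
      (Set.Ioi 0) ∧
    IntegrableOn (fun x : ℝ => 1 / ((1 + x^2) ^ L - 1) * (x^2 / (1 + x^2)))
      (Set.Ioi 0) ∧
    Summable (fun n : ℕ =>
      Real.Gamma (L * (n + 1) - 1/2) / Real.Gamma (L * (n + 1) + 1)) ∧
    (∫ x in Set.Ioi (0:ℝ), 1 / ((1 + x) ^ L - 1) * (Real.sqrt x / (1 + x))) =
      2 * ∫ x in Set.Ioi (0:ℝ), 1 / ((1 + x^2) ^ L - 1) * (x^2 / (1 + x^2)) ∧
    (∫ x in Set.Ioi (0:ℝ), 1 / ((1 + x) ^ L - 1) * (Real.sqrt x / (1 + x))) =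
      Real.sqrt Real.pi / 2 *
        ∑' n : ℕ, Real.Gamma (L * (n + 1) - 1/2) / Real.Gamma (L * (n + 1) + 1) := by
  have hL0 : 0 < L := by linarith
  set c : ℕ → ℝ := fun n => Real.Gamma (L * (n + 1) - 1/2) / Real.Gamma (L * (n + 1) + 1)
    with hc
  set f : ℝ → ℝ := fun x => 1 / ((1 + x) ^ L - 1) * (Real.sqrt x / (1 + x)) with hf
  set g : ℝ → ℝ := fun x => 1 / ((1 + x^2) ^ L - 1) * (x^2 / (1 + x^2)) with hg
  have hbn : ∀ n : ℕ, 0 < L * (n + 1) - 1/2 := by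
    intro n
    have h1 : (0:ℝ) ≤ (n:ℝ) := n.cast_nonneg
    nlinarith
  have hcpos : ∀ n, 0 < c n := fun n =>
    div_pos (Real.Gamma_pos_of_pos (hbn n)) (Real.Gamma_pos_of_pos (by nlinarith [hbn n]))
  have hG32 : Real.Gamma (3/2) = Real.sqrt π / 2 := by
    rw [show (3/2:ℝ) = 1/2 + 1 by norm_num, Real.Gamma_add_one (by norm_num),
      Real.Gamma_one_half_eq]
    ring
  -- term functions
  set T : ℕ → ℝ → ℝ := fun n x => x ^ ((3:ℝ)/2 - 1) * (1+x) ^ (-(L*(n+1)+1)) with hT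
  have hTbeta : ∀ n : ℕ, IntegrableOn (T n) (Ioi 0) ∧
      ∫ x in Ioi (0:ℝ), T n x = Real.sqrt π / 2 * c n := by
    intro n
    have h := betaIoi (a := 3/2) (b := L*(n+1)-1/2) (by norm_num) (hbn n)
    rw [show (3:ℝ)/2 + (L*(n+1)-1/2) = L*(n+1)+1 by ring] at h
    refine ⟨h.1, ?_⟩
    simp only [hT]
    rw [h.2, hG32, hc, mul_div_assoc]
  -- pointwise series expansion
  have hfx : ∀ x : ℝ, 0 < x → (Summable fun n : ℕ => T n x) ∧ f x = ∑' n, T n x := by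
    intro x hx
    have h1x : (1:ℝ) < 1 + x := by linarith
    have h0x : (0:ℝ) < 1 + x := by linarith
    set r : ℝ := (1+x) ^ (-L) with hr
    have hrpos : 0 < r := Real.rpow_pos_of_pos h0x _
    have hr1 : r < 1 := Real.rpow_lt_one_of_one_lt_of_neg h1x (by linarith)
    have hTx : ∀ n : ℕ, T n x = (Real.sqrt x / (1+x)) * (r ^ n * r) := by
      intro n
      have e2 : (r : ℝ) ^ (n+1) = (1+x) ^ (-L * ((n:ℝ)+1)) := by
        rw [hr, ← Real.rpow_natCast ((1+x) ^ (-L)) (n+1), ← Real.rpow_mul h0x.le]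
        push_cast
        ring_nf
      simp only [hT]
      rw [show r ^ n * r = r ^ (n+1) from (pow_succ r n).symm, e2, Real.sqrt_eq_rpow,
        div_eq_mul_inv (x ^ ((1:ℝ)/2)) (1+x), ← Real.rpow_neg_one (1+x), mul_assoc,
        ← Real.rpow_add h0x,
        show (3:ℝ)/2 - 1 = 1/2 by norm_num,
        show (-1 + -L*((n:ℝ)+1)) = -(L*((n:ℝ)+1)+1) by ring]
    have hgeom : Summable (fun n : ℕ => r ^ n * r) :=
      (summable_geometric_of_lt_one hrpos.le hr1).mul_right r
    have hsumT : Summable fun n : ℕ => T n x :=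
      (hgeom.mul_left (Real.sqrt x / (1+x))).congr fun n => (hTx n).symm
    refine ⟨hsumT, ?_⟩
    have htsum : ∑' n, T n x = (Real.sqrt x / (1+x)) * ((1-r)⁻¹ * r) := by
      rw [tsum_congr hTx, tsum_mul_left, tsum_mul_right,
        tsum_geometric_of_lt_one hrpos.le hr1]
    rw [htsum, hf]
    have hA : (1:ℝ) < (1+x) ^ L :=
      (Real.one_lt_rpow_iff_of_pos h0x).mpr (Or.inl ⟨h1x, hL0⟩)
    have hrA : r = ((1+x) ^ L)⁻¹ := by
      rw [hr, Real.rpow_neg h0x.le]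
    rw [hrA]
    have hAne : (1+x) ^ L ≠ 0 := by positivity
    have hA1ne : (1+x) ^ L - 1 ≠ 0 := by intro h'; linarith
    field_simp
  -- ennreal machinery
  have hmeasT : ∀ n : ℕ, Measurable (fun x => ENNReal.ofReal (T n x)) := by
    intro n
    simp only [hT]
    fun_prop
  have hTnonneg : ∀ n : ℕ, ∀ x ∈ Ioi (0:ℝ), 0 ≤ T n x := by
    intro n x hx
    have hx' : (0:ℝ) < x := hx
    simp only [hT]
    positivity
  have hkey : ∫⁻ x in Ioi 0, ENNReal.ofReal (f x)
      = ∑' n, ENNReal.ofReal (Real.sqrt π / 2 * c n) := by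
    rw [setLIntegral_congr_fun measurableSet_Ioi
      (fun x hx => by
        rw [(hfx x hx).2,
          ENNReal.ofReal_tsum_of_nonneg (fun n => hTnonneg n x hx) (hfx x hx).1]),
      lintegral_tsum (fun n => (hmeasT n).aemeasurable)]
    refine tsum_congr fun n => ?_
    rw [← (hTbeta n).2]
    exact (ofReal_integral_eq_lintegral_ofReal (hTbeta n).1
      ((ae_restrict_iff' measurableSet_Ioi).mpr (ae_of_all _ (hTnonneg n)))).symm
  -- finiteness via a single beta-type bound
  set M : ℝ := min L 1 with hM
  have hM0 : 0 < M := lt_min hL0 one_pos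
  have hM1 : M ≤ 1 := min_le_right _ _
  have hMhalf : 1/2 < M := lt_min hL (by norm_num)
  have hML : M ≤ L := min_le_left _ _
  set B : ℝ → ℝ := fun x => (1/M) * (x ^ ((1:ℝ)/2 - 1) * (1+x) ^ (-((1:ℝ)/2 + (M - 1/2))))
    with hB
  have hBint : IntegrableOn B (Ioi 0) :=
    (betaIoi (a := 1/2) (b := M - 1/2) (by norm_num) (by linarith)).1.const_mul _
  have hbound : ∀ x ∈ Ioi (0:ℝ), f x ≤ B x := by
    intro x hx
    have hx' : (0:ℝ) < x := hx
    have h0x : (0:ℝ) < 1 + x := by linarith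
    have h1x : (1:ℝ) < 1 + x := by linarith
    have hApos : 0 < (1+x) ^ M := Real.rpow_pos_of_pos h0x M
    have key : M * x * (1+x) ^ (M - 1) ≤ (1+x) ^ M - 1 := by
      have hfrac : x/(1+x) < 1 := by rw [div_lt_one h0x]; linarith
      have hfrac0 : (0:ℝ) ≤ x/(1+x) := by positivity
      have h := rpow_one_add_le_one_add_mul_self (s := -(x/(1+x))) (by linarith) hM0.le hM1
      have e3 : 1 + -(x/(1+x)) = (1+x)⁻¹ := by field_simp; ring
      rw [e3, Real.inv_rpow h0x.le] at h
      have h6 : 1 ≤ (1 + M * -(x/(1+x))) * (1+x) ^ M := by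
        calc (1:ℝ) = ((1+x) ^ M)⁻¹ * (1+x) ^ M := by field_simp
          _ ≤ _ := mul_le_mul_of_nonneg_right h hApos.le
      have e4 : (1+x) ^ (M - 1) = (1+x) ^ M / (1+x) := by
        rw [Real.rpow_sub h0x, Real.rpow_one]
      rw [e4]
      have e5 : M * x * ((1+x) ^ M / (1+x)) = M * (x/(1+x)) * (1+x) ^ M := by ring
      rw [e5]
      nlinarith [h6]
    have hcmp : (1+x) ^ M ≤ (1+x) ^ L :=
      Real.rpow_le_rpow_of_exponent_le h1x.le hML
    have hden : 0 < M * x * (1+x) ^ (M-1) := by positivity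
    have hfle : f x ≤ 1 / (M * x * (1+x) ^ (M-1)) * (Real.sqrt x / (1+x)) := by
      simp only [hf]
      have h2 : M * x * (1+x) ^ (M-1) ≤ (1+x) ^ L - 1 := by linarith
      gcongr
    refine hfle.trans (le_of_eq ?_)
    simp only [hB]
    rw [show -((1:ℝ)/2 + (M - 1/2)) = -M by ring, show (1:ℝ)/2 - 1 = -((1:ℝ)/2) by norm_num]
    have eA : Real.sqrt x / x = x ^ (-((1:ℝ)/2)) := by
      rw [Real.sqrt_eq_rpow, show (-((1:ℝ)/2)) = 1/2 - 1 by norm_num, Real.rpow_sub hx',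
        Real.rpow_one]
    have eB : (1+x) ^ (M-1) * (1+x) = (1+x) ^ M := by
      nth_rewrite 2 [← Real.rpow_one (1+x)]
      rw [← Real.rpow_add h0x, show M - 1 + 1 = M by ring]
    rw [Real.rpow_neg h0x.le, ← eA, ← eB]
    have hne1 : (1+x) ^ (M-1) ≠ 0 := by positivity
    rw [div_mul_div_comm, one_div, one_mul]
    rw [div_eq_iff (by positivity : (0:ℝ) < M * x * (1+x)^(M-1) * (1+x)).ne']
    rw [mul_inv, eq_comm]
    field_simp
  have hlt : ∫⁻ x in Ioi 0, ENNReal.ofReal (f x) < ⊤ := by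
    have hmono : ∫⁻ x in Ioi 0, ENNReal.ofReal (f x)
        ≤ ∫⁻ x in Ioi 0, ENNReal.ofReal (B x) := by
      refine lintegral_mono_ae ?_
      filter_upwards [ae_restrict_mem measurableSet_Ioi] with x hx
      exact ENNReal.ofReal_le_ofReal (hbound x hx)
    exact lt_of_le_of_lt hmono hBint.lintegral_lt_top
  have hfin : (∑' n, ENNReal.ofReal (Real.sqrt π/2 * c n)) ≠ ⊤ := by
    rw [← hkey]; exact hlt.ne
  -- summability
  have hdpos : ∀ n, 0 ≤ Real.sqrt π/2 * c n := fun n =>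
    mul_nonneg (by positivity) (hcpos n).le
  have hsumd : Summable (fun n => Real.sqrt π/2 * c n) :=
    (ENNReal.summable_toReal hfin).congr (fun n => ENNReal.toReal_ofReal (hdpos n))
  have hπ : Real.sqrt π ≠ 0 := by positivity
  have hsumc : Summable c := by
    refine (hsumd.mul_left (2/Real.sqrt π)).congr fun n => ?_
    field_simp
  -- integrability of f
  have hfmeas : AEStronglyMeasurable f (volume.restrict (Ioi 0)) := by
    apply Measurable.aestronglyMeasurable
    simp only [hf]
    fun_prop
  have hfnonneg : 0 ≤ᵐ[volume.restrict (Ioi 0)] f := by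
    filter_upwards [ae_restrict_mem measurableSet_Ioi] with x hx
    have hx' : (0:ℝ) < x := hx
    have h0x : (0:ℝ) < 1 + x := by linarith
    have hA : (1:ℝ) < (1+x) ^ L :=
      (Real.one_lt_rpow_iff_of_pos h0x).mpr (Or.inl ⟨by linarith, hL0⟩)
    simp only [hf]
    exact mul_nonneg (le_of_lt (div_pos one_pos (by linarith)))
      (div_nonneg (Real.sqrt_nonneg x) h0x.le)
  have hfint : IntegrableOn f (Ioi 0) :=
    ⟨hfmeas, (hasFiniteIntegral_iff_ofReal hfnonneg).mpr hlt⟩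
  -- value of the integral
  have hval : ∫ x in Ioi (0:ℝ), f x = Real.sqrt π / 2 * ∑' n, c n := by
    have h1 : ENNReal.ofReal (∫ x in Ioi (0:ℝ), f x)
        = ∫⁻ x in Ioi 0, ENNReal.ofReal (f x) :=
      ofReal_integral_eq_lintegral_ofReal hfint hfnonneg
    rw [hkey, ← ENNReal.ofReal_tsum_of_nonneg hdpos hsumd] at h1
    have h2 : ∫ x in Ioi (0:ℝ), f x = ∑' n, Real.sqrt π/2 * c n :=
      (ENNReal.ofReal_eq_ofReal_iff (integral_nonneg_of_ae hfnonneg)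
        (tsum_nonneg hdpos)).mp h1
    rw [h2, tsum_mul_left]
  -- substitution x ↦ x²
  have hcomp : ∀ x ∈ Ioi (0:ℝ), x ^ ((2:ℝ)-1) • f (x ^ (2:ℝ)) = g x := by
    intro x hx
    have hx' : (0:ℝ) < x := hx
    rw [smul_eq_mul, show (2:ℝ)-1 = 1 by norm_num, Real.rpow_one, Real.rpow_two]
    simp only [hf, hg]
    rw [Real.sqrt_sq hx'.le]
    ring
  have hgint : IntegrableOn g (Ioi 0) := by
    have h := (integrableOn_Ioi_comp_rpow_iff' f (p := 2) (by norm_num)).mpr hfint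
    exact (integrableOn_congr_fun hcomp measurableSet_Ioi).mp h
  have hsub : ∫ x in Ioi (0:ℝ), f x = 2 * ∫ x in Ioi (0:ℝ), g x := by
    rw [← integral_comp_rpow_Ioi_of_pos (g := f) (p := 2) two_pos]
    rw [setIntegral_congr_fun measurableSet_Ioi
      (show ∀ x ∈ Ioi (0:ℝ), ((2:ℝ) * x ^ ((2:ℝ)-1)) • f (x ^ (2:ℝ)) = 2 * g x from
        fun x hx => by rw [mul_smul, smul_eq_mul, hcomp x hx])]
    exact integral_const_mul 2 g
  exact ⟨hfint, hgint, hsumc, hsub, hval⟩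
end

section
/- For any 0 < r < 1, I_2(r) = (2π(1−r²)/r²) · (1/(1+r²) − 1/(2√(1+r⁴))), where I_L(r) = ∫_{−π}^{π} ((1−r²)^{2L} / (|1−r²e^{iθ}|^{2L} − (1−r²)^{2L})) · (2(1−cos θ)/|1−r²e^{iθ}|²) dθ. -/
open Filter

/-- The integral `I_L(r)` from the key lemma:
`∫_{−π}^{π} (1−r²)^{2L} / (|1−r²e^{iθ}|^{2L} − (1−r²)^{2L}) · 2(1−cos θ)/|1−r²e^{iθ}|² dθ`. -/
noncomputable def hypIntegral (L r : ℝ) : ℝ :=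
  ∫ θ in (-Real.pi)..Real.pi,
    (1 - r^2) ^ (2*L) /
        (‖(1 - (r^2 : ℂ) * Complex.exp (θ * Complex.I))‖ ^ (2*L)
          - (1 - r^2) ^ (2*L)) *
      (2 * (1 - Real.cos θ) /
        ‖(1 - (r^2 : ℂ) * Complex.exp (θ * Complex.I))‖ ^ (2:ℕ))

/-- Smooth antiderivative of `1 / (p - q cos θ)`. -/
lemma hasDerivAt_F (p q : ℝ) (hq : 0 ≤ q) (hpq : q < p) (θ : ℝ) :
    HasDerivAt (fun θ : ℝ =>
        (θ + 2 * Real.arctan (q * Real.sin θ / (p + Real.sqrt (p^2 - q^2) - q * Real.cos θ)))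
          / Real.sqrt (p^2 - q^2))
      (1 / (p - q * Real.cos θ)) θ := by
  have hp : 0 < p := lt_of_le_of_lt hq hpq
  set k := Real.sqrt (p^2 - q^2) with hkdef
  have hk2 : k ^ 2 = p ^ 2 - q ^ 2 := Real.sq_sqrt (by nlinarith)
  have hkpos : 0 < k := Real.sqrt_pos.2 (by nlinarith)
  have hqc : q * Real.cos θ ≤ q := by
    nlinarith [Real.cos_le_one θ, Real.neg_one_le_cos θ]
  have hD : 0 < p + k - q * Real.cos θ := by linarith
  have hA : 0 < p - q * Real.cos θ := by linarith
  have hu : HasDerivAt (fun θ : ℝ => q * Real.sin θ / (p + k - q * Real.cos θ))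
      ((q * Real.cos θ * (p + k - q * Real.cos θ) - q * Real.sin θ * (q * Real.sin θ))
        / (p + k - q * Real.cos θ)^2) θ := by
    have h1 : HasDerivAt (fun θ : ℝ => q * Real.sin θ) (q * Real.cos θ) θ :=
      (Real.hasDerivAt_sin θ).const_mul q
    have h2 : HasDerivAt (fun θ : ℝ => p + k - q * Real.cos θ) (q * Real.sin θ) θ := by
      have := ((Real.hasDerivAt_cos θ).const_mul q).const_sub (p + k)
      simpa using this
    exact h1.div h2 hD.ne'
  have harc := (Real.hasDerivAt_arctan
      (q * Real.sin θ / (p + k - q * Real.cos θ))).comp θ hu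
  have hF := ((hasDerivAt_id θ).add (harc.const_mul 2)).div_const k
  refine hF.congr_deriv (Eq.symm ?_)
  have hs := Real.sin_sq_add_cos_sq θ
  have h1u : (0:ℝ) < 1 + (q * Real.sin θ / (p + k - q * Real.cos θ))^2 := by positivity
  have h2 : (p + k - q * Real.cos θ)^2 + (q * Real.sin θ)^2
      = 2 * (p + k) * (p - q * Real.cos θ) := by linear_combination hk2 + q^2 * hs
  have h3 : q * Real.cos θ * (p + k - q * Real.cos θ) - q * Real.sin θ * (q * Real.sin θ)
      = (p + k) * (q * Real.cos θ - p + k) := by linear_combination (-q^2) * hs - hk2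
  have hfrac : 1 / (1 + (q * Real.sin θ / (p + k - q * Real.cos θ)) ^ 2) *
      ((q * Real.cos θ * (p + k - q * Real.cos θ) - q * Real.sin θ * (q * Real.sin θ)) /
        (p + k - q * Real.cos θ) ^ 2)
      = (q * Real.cos θ * (p + k - q * Real.cos θ) - q * Real.sin θ * (q * Real.sin θ)) /
        ((p + k - q * Real.cos θ)^2 + (q * Real.sin θ)^2) := by
    have hne : ((p + k - q * Real.cos θ)^2 + (q * Real.sin θ)^2) ≠ 0 := by positivity
    field_simp
  have hmain : (1 : ℝ) + 2 * (1 / (1 + (q * Real.sin θ / (p + k - q * Real.cos θ)) ^ 2) *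
      ((q * Real.cos θ * (p + k - q * Real.cos θ) - q * Real.sin θ * (q * Real.sin θ)) /
        (p + k - q * Real.cos θ) ^ 2)) = k / (p - q * Real.cos θ) := by
    rw [hfrac, h2, h3]
    have hpk : (0:ℝ) < p + k := by linarith
    have hAne := hA.ne'
    have hpkne := hpk.ne'
    field_simp
    ring
  show 1 / (p - q * Real.cos θ) = _
  rw [hmain, div_div]
  rw [div_eq_div_iff hA.ne' (by positivity)]
  ring

/-- The classical integral `∫_{-π}^{π} dθ/(p - q cos θ) = 2π/√(p²-q²)`. -/
lemma integral_inv_sub_cos (p q : ℝ) (hq : 0 ≤ q) (hpq : q < p) :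
    ∫ θ in (-Real.pi)..Real.pi, 1 / (p - q * Real.cos θ)
      = 2 * Real.pi / Real.sqrt (p^2 - q^2) := by
  have hp : 0 < p := lt_of_le_of_lt hq hpq
  have hApos : ∀ θ : ℝ, 0 < p - q * Real.cos θ := by
    intro θ
    nlinarith [Real.cos_le_one θ, Real.neg_one_le_cos θ]
  have hcont : Continuous fun θ : ℝ => 1 / (p - q * Real.cos θ) :=
    continuous_const.div (by continuity) (fun θ => (hApos θ).ne')
  have key := intervalIntegral.integral_eq_sub_of_hasDerivAt
    (a := -Real.pi) (b := Real.pi) (f := fun θ : ℝ =>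
        (θ + 2 * Real.arctan (q * Real.sin θ / (p + Real.sqrt (p^2 - q^2) - q * Real.cos θ)))
          / Real.sqrt (p^2 - q^2))
    (fun θ _ => hasDerivAt_F p q hq hpq θ) (hcont.intervalIntegrable _ _)
  rw [key]
  simp [Real.sin_pi, Real.arctan_zero]
  ring

lemma abs_sq_eq' (r x : ℝ) :
    ‖(1 - (r:ℂ)^2 * Complex.exp (x * Complex.I))‖ ^ (2:ℕ)
      = 1 - 2*r^2*Real.cos x + r^4 := by
  rw [Complex.sq_norm, Complex.normSq_apply]
  simp [← Complex.ofReal_pow, Complex.exp_ofReal_mul_I_re, Complex.exp_ofReal_mul_I_im]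
  linear_combination (r^4) * (Real.sin_sq_add_cos_sq x)

lemma rpow_twotwo (y : ℝ) : y ^ ((2:ℝ)*2) = (y^(2:ℕ))^(2:ℕ) := by
  rw [show ((2:ℝ)*2) = ((4:ℕ):ℝ) by norm_num, Real.rpow_natCast]
  ring

theorem hypIntegral_two (r : ℝ) (hr0 : 0 < r) (hr1 : r < 1) :
    hypIntegral 2 r = 2 * Real.pi * (1 - r^2) / r^2 *
      (1 / (1 + r^2) - 1 / (2 * Real.sqrt (1 + r^4))) := by
  have hr2 : 0 < r^2 := by positivity
  have hr21 : r^2 < 1 := by nlinarith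
  have ha : 0 < 1 - r^2 := by linarith
  have hpi : 0 < Real.pi := Real.pi_pos
  -- the two target "Poisson kernel" denominators
  have hq1 : (0:ℝ) ≤ 2*r^2 := by positivity
  have hpq1 : 2*r^2 < 1 + r^4 := by nlinarith
  have hq2 : (0:ℝ) ≤ r^2 := le_of_lt hr2
  have hpq2 : r^2 < (1-r^2)^2 + r^2 := by nlinarith
  have hcont1 : Continuous fun θ : ℝ => 1 / ((1 + r^4) - (2*r^2) * Real.cos θ) := by
    refine continuous_const.div (by continuity) (fun θ => ?_)
    nlinarith [Real.cos_le_one θ, Real.neg_one_le_cos θ]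
  have hcont2 : Continuous fun θ : ℝ => 1 / (((1-r^2)^2 + r^2) - r^2 * Real.cos θ) := by
    refine continuous_const.div (by continuity) (fun θ => ?_)
    nlinarith [Real.cos_le_one θ, Real.neg_one_le_cos θ]
  -- Step 1: rewrite the integrand a.e.
  have step1 : hypIntegral 2 r = ∫ θ in (-Real.pi)..Real.pi,
      ((1-r^2)^2/r^2 * (1 / ((1 + r^4) - (2*r^2) * Real.cos θ))
        - (1-r^2)^2/(2*r^2) * (1 / (((1-r^2)^2 + r^2) - r^2 * Real.cos θ))) := by
    rw [hypIntegral]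
    apply intervalIntegral.integral_congr_ae
    have h0 : ∀ᵐ x : ℝ, x ≠ (0:ℝ) := by
      rw [MeasureTheory.ae_iff]
      simp only [not_not, Set.setOf_eq_eq_singleton]
      exact Real.volume_singleton
    filter_upwards [h0] with x hx hxmem
    have hxI : x ∈ Set.Ioc (-Real.pi) Real.pi := by
      rwa [Set.uIoc_of_le (by linarith)] at hxmem
    have hcos1 : Real.cos x < 1 := by
      rcases lt_or_eq_of_le (Real.cos_le_one x) with h | h
      · exact h
      · exact absurd ((Real.cos_eq_one_iff_of_lt_of_lt
          (by nlinarith [hxI.1]) (by nlinarith [hxI.2])).1 h) hx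
    have ht : 0 < 1 - Real.cos x := by linarith
    have hA' : 0 < 1 - 2*r^2*Real.cos x + r^4 := by nlinarith
    have hA'' : 0 < (1-r^2)^2 + r^2 - r^2*Real.cos x := by nlinarith
    rw [rpow_twotwo, rpow_twotwo, abs_sq_eq']
    have hdiff : (1 - 2*r^2*Real.cos x + r^4)^(2:ℕ) - ((1-r^2)^(2:ℕ))^(2:ℕ)
        = 4*r^2*(1-Real.cos x)*((1-r^2)^2 + r^2 - r^2*Real.cos x) := by ring
    rw [hdiff]
    have h1 : ((1 + r^4) - (2*r^2) * Real.cos x) = 1 - 2*r^2*Real.cos x + r^4 := by ring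
    rw [h1]
    have h2 : (((1-r^2)^2 + r^2) - r^2 * Real.cos x) = (1-r^2)^2 + r^2 - r^2*Real.cos x := by ring
    rw [h2]
    rw [div_mul_div_comm, mul_one_div, mul_one_div, div_div, div_div,
      div_sub_div _ _ (by positivity) (by positivity), div_eq_div_iff (by positivity) (by positivity)]
    ring
  -- Step 2: split and evaluate the two integrals
  have hint1 := integral_inv_sub_cos (1 + r^4) (2*r^2) hq1 hpq1
  have hint2 := integral_inv_sub_cos ((1-r^2)^2 + r^2) (r^2) hq2 hpq2
  rw [step1, intervalIntegral.integral_sub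
      (f := fun θ : ℝ => (1-r^2)^2/r^2 * (1 / ((1 + r^4) - (2*r^2) * Real.cos θ)))
      (g := fun θ : ℝ => (1-r^2)^2/(2*r^2) * (1 / (((1-r^2)^2 + r^2) - r^2 * Real.cos θ)))
      ((continuous_const.mul hcont1).intervalIntegrable _ _)
      ((continuous_const.mul hcont2).intervalIntegrable _ _),
    intervalIntegral.integral_const_mul, intervalIntegral.integral_const_mul,
    hint1, hint2]
  -- Step 3: simplify the square roots
  have hsq1 : Real.sqrt ((1 + r^4)^2 - (2*r^2)^2) = (1-r^2)*(1+r^2) := by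
    rw [show (1 + r^4)^2 - (2*r^2)^2 = ((1-r^2)*(1+r^2))^2 by ring]
    exact Real.sqrt_sq (by nlinarith)
  have hsq2 : Real.sqrt (((1-r^2)^2 + r^2)^2 - (r^2)^2)
      = (1-r^2) * Real.sqrt (1 + r^4) := by
    rw [show ((1-r^2)^2 + r^2)^2 - (r^2)^2 = (1-r^2)^2 * (1 + r^4) by ring,
      Real.sqrt_mul (sq_nonneg _), Real.sqrt_sq ha.le]
  rw [hsq1, hsq2]
  have hw : 0 < Real.sqrt (1 + r^4) := Real.sqrt_pos.2 (by positivity)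
  field_simp
end

section
/- For L = 1/2, lim_{r→1⁻} I_{1/2}(r) / (4(1−r) log(1/(1−r))) = 1, where I_L(r) = ∫_{−π}^{π} ((1−r²)^{2L} / (|1−r²e^{iθ}|^{2L} − (1−r²)^{2L})) · (2(1−cos θ)/|1−r²e^{iθ}|²) dθ. -/
open Filter

open MeasureTheory intervalIntegral Real


-- antiderivative lemmas
lemma int_inv_sqrt {ε c : ℝ} (hε : 0 < ε) (hc : 0 < c) (a b : ℝ) :
    ∫ θ in a..b, (Real.sqrt (ε^2 + c*θ^2))⁻¹
      = (Real.sqrt c)⁻¹ * (Real.arsinh (Real.sqrt c * b/ε) - Real.arsinh (Real.sqrt c * a/ε)) := by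
  have hsc : 0 < Real.sqrt c := Real.sqrt_pos.2 hc
  have key : ∀ x : ℝ, HasDerivAt (fun y => (Real.sqrt c)⁻¹ * Real.arsinh (Real.sqrt c * y/ε))
      ((Real.sqrt (ε^2 + c*x^2))⁻¹) x := by
    intro x
    have h1 : HasDerivAt (fun y : ℝ => Real.sqrt c * y/ε) (Real.sqrt c / ε) x := by
      simpa using ((hasDerivAt_id x).const_mul (Real.sqrt c)).div_const ε
    have h2 := (Real.hasDerivAt_arsinh (Real.sqrt c * x/ε)).comp x h1
    have h3 := h2.const_mul (Real.sqrt c)⁻¹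
    refine h3.congr_deriv ?_
    symm
    have hx : (Real.sqrt c * x / ε)^2 = c * x^2 / ε^2 := by
      rw [div_pow, mul_pow, Real.sq_sqrt hc.le]
    rw [hx]
    have h4 : (1 : ℝ) + c*x^2/ε^2 = (ε^2 + c*x^2)/ε^2 := by field_simp
    have h5 : Real.sqrt ((ε^2 + c*x^2)/ε^2) = Real.sqrt (ε^2 + c*x^2) / ε := by
      rw [Real.sqrt_div (by positivity) , Real.sqrt_sq hε.le]
    rw [h4, h5]
    have h6 : Real.sqrt (ε^2 + c*x^2) ≠ 0 := by positivity
    field_simp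
  rw [intervalIntegral.integral_eq_sub_of_hasDerivAt (fun x _ => key x)]
  · ring
  · apply Continuous.intervalIntegrable
    have : ∀ x : ℝ, Real.sqrt (ε^2 + c*x^2) ≠ 0 := fun x => by positivity
    exact (Real.continuous_sqrt.comp (by continuity)).inv₀ this

lemma int_inv_quad {ε c : ℝ} (hε : 0 < ε) (hc : 0 < c) (a b : ℝ) :
    ∫ θ in a..b, (ε^2 + c*θ^2)⁻¹
      = (ε * Real.sqrt c)⁻¹ *
          (Real.arctan (Real.sqrt c * b/ε) - Real.arctan (Real.sqrt c * a/ε)) := by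
  have hsc : 0 < Real.sqrt c := Real.sqrt_pos.2 hc
  have key : ∀ x : ℝ, HasDerivAt (fun y => (ε * Real.sqrt c)⁻¹ * Real.arctan (Real.sqrt c * y/ε))
      ((ε^2 + c*x^2)⁻¹) x := by
    intro x
    have h1 : HasDerivAt (fun y : ℝ => Real.sqrt c * y/ε) (Real.sqrt c / ε) x := by
      simpa using ((hasDerivAt_id x).const_mul (Real.sqrt c)).div_const ε
    have h2 := (Real.hasDerivAt_arctan (Real.sqrt c * x/ε)).comp x h1
    have h3 := h2.const_mul (ε * Real.sqrt c)⁻¹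
    refine h3.congr_deriv ?_
    symm
    have hx : (Real.sqrt c * x / ε)^2 = c * x^2 / ε^2 := by
      rw [div_pow, mul_pow, Real.sq_sqrt hc.le]
    rw [hx]
    have h4 : (1 : ℝ) + c*x^2/ε^2 = (ε^2 + c*x^2)/ε^2 := by field_simp
    rw [h4]
    have h6 : ε^2 + c*x^2 ≠ 0 := by positivity
    field_simp
  rw [intervalIntegral.integral_eq_sub_of_hasDerivAt (fun x _ => key x)]
  · ring
  · apply Continuous.intervalIntegrable
    have : ∀ x : ℝ, ε^2 + c*x^2 ≠ 0 := fun x => by positivity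
    exact Continuous.inv₀ (by continuity) this

lemma cos_quad_lower {θ δ : ℝ} (hδ : δ ≤ 1) (h : |θ| ≤ δ) :
    θ^2 * (1 - δ^2/8) ≤ 2*(1 - Real.cos θ) := by
  have habs : |θ| ≤ 1 := le_trans h hδ
  have hsq : θ^2 ≤ δ^2 := by
    have := abs_nonneg θ
    nlinarith [sq_abs θ]
  rcases eq_or_ne θ 0 with rfl | hθ
  · simp
  · have h0 : 0 < |θ| := abs_pos.2 hθ
    have h1 : |θ|/2 ≤ 1 := by linarith
    have h2 : 0 < |θ|/2 := by linarith
    have hs := Real.sin_gt_sub_cube h2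
    have hcos : Real.cos |θ| = Real.cos θ := by
      rcases abs_choice θ with h | h <;> rw [h] <;> simp [Real.cos_neg]
    have hsin2 : Real.sin (|θ|/2)^2 = (1 - Real.cos θ)/2 := by
      have := Real.sin_sq_eq_half_sub (|θ|/2)
      rw [this]
      rw [show 2*(|θ|/2) = |θ| by ring, hcos]
      ring
    have ht2 : (|θ|/2)^2 ≤ 1 := by nlinarith
    have ht3 : 0 ≤ (|θ|/2) * (1 - (|θ|/2)^2) := mul_nonneg h2.le (by nlinarith)
    have hpos : 0 < |θ|/2 - (|θ|/2)^3/4 := by nlinarith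
    have hsq2 : (|θ|/2 - (|θ|/2)^3/4)^2 ≤ Real.sin (|θ|/2)^2 := by
      nlinarith [mul_self_le_mul_self hpos.le
        (le_of_lt (by nlinarith [pow_pos h2 3] : |θ|/2 - (|θ|/2)^3/4 < Real.sin (|θ|/2)))]
    rw [hsin2] at hsq2
    have hab : |θ|^2 = θ^2 := sq_abs θ
    nlinarith [sq_nonneg θ, sq_nonneg (θ^2 - δ^2), sq_nonneg (|θ|^3)]

lemma arsinh_eq_log (x : ℝ) : Real.arsinh x = Real.log (x + Real.sqrt (1+x^2)) := by
  rw [← Real.exp_arsinh, Real.log_exp]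

lemma log_le_arsinh {x : ℝ} (hx : 0 < x) : Real.log (2*x) ≤ Real.arsinh x := by
  rw [arsinh_eq_log]
  apply Real.log_le_log (by linarith)
  nlinarith [Real.sq_sqrt (by positivity : (0:ℝ) ≤ 1 + x^2), Real.sqrt_nonneg (1+x^2),
    Real.sqrt_le_sqrt (by nlinarith : x^2 ≤ 1 + x^2), Real.sqrt_sq hx.le]

lemma arsinh_le_log {x : ℝ} (hx : 0 ≤ x) : Real.arsinh x ≤ Real.log (2*x+1) := by
  rw [arsinh_eq_log]
  apply Real.log_le_log (by positivity)
  have : Real.sqrt (1+x^2) ≤ 1 + x := by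
    rw [show (1:ℝ)+x = Real.sqrt ((1+x)^2) from (Real.sqrt_sq (by linarith)).symm]
    apply Real.sqrt_le_sqrt; nlinarith
  linarith

noncomputable def Qf (r θ : ℝ) : ℝ := Real.sqrt ((1-r^2)^2 + 2*r^2*(1-Real.cos θ))


lemma qsq (r θ : ℝ) :
    ‖(1 - (r^2:ℂ) * Complex.exp (θ*Complex.I))‖^(2:ℕ)
      = (1-r^2)^2 + 2*r^2*(1-Real.cos θ) := by
  rw [Complex.sq_norm, Complex.normSq_apply]
  simp [Complex.exp_mul_I, Complex.sub_re, Complex.sub_im, Complex.mul_re, Complex.mul_im,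
    Complex.cos_ofReal_re, Complex.sin_ofReal_re, ← Complex.ofReal_pow, Complex.ofReal_re,
    Complex.ofReal_im]
  nlinarith [Real.sin_sq_add_cos_sq θ]

lemma qarg_pos {r : ℝ} (hr0 : 0 < r) (hr1 : r < 1) (θ : ℝ) :
    0 < (1-r^2)^2 + 2*r^2*(1-Real.cos θ) := by
  have h1 : 0 < 1 - r^2 := by nlinarith
  nlinarith [Real.cos_le_one θ, sq_nonneg r]

lemma qf_pos {r : ℝ} (hr0 : 0 < r) (hr1 : r < 1) (θ : ℝ) : 0 < Qf r θ :=
  Real.sqrt_pos.2 (qarg_pos hr0 hr1 θ)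

lemma qf_eq_abs (r θ : ℝ) :
    ‖(1 - (r^2:ℂ) * Complex.exp (θ*Complex.I))‖ = Qf r θ := by
  rw [Qf, ← qsq r θ, Real.sqrt_sq (norm_nonneg _)]

lemma qsq' (r θ : ℝ) : Qf r θ ^ 2 = (1-r^2)^2 + 2*r^2*(1-Real.cos θ) := by
  rw [← qf_eq_abs r θ, qsq]

lemma qf_gt {r : ℝ} (hr0 : 0 < r) (hr1 : r < 1) {θ : ℝ} (hc : Real.cos θ < 1) :
    1 - r^2 < Qf r θ := by
  have h1 : 0 < 1 - r^2 := by nlinarith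
  have hs := qsq' r θ
  nlinarith [qf_pos hr0 hr1 θ, mul_pos (mul_pos (by norm_num : (0:ℝ)<2) (by positivity : (0:ℝ) < r^2)) (by linarith : 0 < 1 - Real.cos θ)]

lemma qf_cont (r : ℝ) : Continuous (Qf r) := by
  apply Real.continuous_sqrt.comp
  continuity

noncomputable def Af (r : ℝ) : ℝ := ∫ θ in (-Real.pi)..Real.pi, (Qf r θ)⁻¹
noncomputable def Bf (r : ℝ) : ℝ := ∫ θ in (-Real.pi)..Real.pi, ((Qf r θ)^2)⁻¹

lemma hyp_rewrite {r : ℝ} (hr0 : 0 < r) (hr1 : r < 1) :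
    hypIntegral (1/2) r = (1-r^2)/r^2 * (Af r + (1-r^2) * Bf r) := by
  have hρ : (0:ℝ) < r^2 := by positivity
  have hε : 0 < 1 - r^2 := by nlinarith
  have hint1 : IntervalIntegrable (fun θ => (Qf r θ)⁻¹) volume (-Real.pi) Real.pi :=
    (Continuous.intervalIntegrable (by
      exact (qf_cont r).inv₀ (fun θ => (qf_pos hr0 hr1 θ).ne')) _ _)
  have hint2 : IntervalIntegrable (fun θ => ((Qf r θ)^2)⁻¹) volume (-Real.pi) Real.pi :=
    (Continuous.intervalIntegrable (by
      exact ((qf_cont r).pow 2).inv₀ (fun θ => (pow_pos (qf_pos hr0 hr1 θ) 2).ne')) _ _)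
  have step1 : hypIntegral (1/2) r
      = ∫ θ in (-Real.pi)..Real.pi,
          (1-r^2)/r^2 * ((Qf r θ)⁻¹ + (1-r^2) * ((Qf r θ)^2)⁻¹) := by
    rw [hypIntegral]
    apply intervalIntegral.integral_congr_ae
    have h0 : ∀ᵐ (θ:ℝ), θ ≠ 0 := by
      rw [MeasureTheory.ae_iff]
      have hset : {a : ℝ | ¬ a ≠ 0} = {0} := by ext x; simp
      rw [hset]
      exact measure_singleton 0
    filter_upwards [h0] with θ hθ hmem
    have hθπ : -Real.pi < θ ∧ θ ≤ Real.pi := by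
      rw [Set.uIoc_of_le (by linarith [Real.pi_pos] : -Real.pi ≤ Real.pi)] at hmem
      exact ⟨hmem.1, hmem.2⟩
    have hc : Real.cos θ < 1 := by
      rcases lt_or_eq_of_le (Real.cos_le_one θ) with h | h
      · exact h
      · exfalso
        have := (Real.cos_eq_one_iff_of_lt_of_lt (x := θ)
          (by nlinarith [Real.pi_pos]) (by nlinarith [Real.pi_pos])).1 h
        exact hθ this
    have h2L : (2 * (1/2) : ℝ) = 1 := by norm_num
    simp only [h2L, Real.rpow_one, qf_eq_abs]
    have hq := qf_pos hr0 hr1 θ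
    have hgt := qf_gt hr0 hr1 hc
    have hk : 2*(1-Real.cos θ) = (Qf r θ^2 - (1-r^2)^2)/r^2 := by
      rw [qsq']; field_simp; ring
    rw [hk]
    have hne : Qf r θ - (1-r^2) ≠ 0 := by linarith
    field_simp
    ring
  rw [step1, intervalIntegral.integral_const_mul]
  rw [intervalIntegral.integral_add hint1 (hint2.const_mul _)]
  rw [intervalIntegral.integral_const_mul]
  rfl

open Real in
lemma Bf_bound {r : ℝ} (hr : 1/2 < r) (hr1 : r < 1) : (1-r^2) * Bf r ≤ π^2 := by
  have hr0 : 0 < r := by linarith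
  have hε : 0 < 1 - r^2 := by nlinarith
  have hk : 0 < 4*r^2/π^2 := by positivity
  have hsk : Real.sqrt (4*r^2/π^2) = 2*r/π := by
    rw [show 4*r^2/π^2 = (2*r/π)^2 by ring]
    exact Real.sqrt_sq (by positivity)
  have hmono : Bf r ≤ ∫ θ in (-π)..π, ((1-r^2)^2 + (4*r^2/π^2)*θ^2)⁻¹ := by
    rw [Bf]
    apply intervalIntegral.integral_mono_on (by linarith [pi_pos])
    · exact Continuous.intervalIntegrable
        (((qf_cont r).pow 2).inv₀ (fun θ => (pow_pos (qf_pos hr0 hr1 θ) 2).ne')) _ _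
    · exact Continuous.intervalIntegrable
        (Continuous.inv₀ (by continuity) (fun θ => by positivity)) _ _
    · intro θ hθ
      have habs : |θ| ≤ π := abs_le.2 ⟨hθ.1, hθ.2⟩
      have hcos := Real.cos_le_one_sub_mul_cos_sq habs
      apply inv_anti₀ (by positivity)
      rw [qsq']
      have h5 : 2*r^2*((2/π^2)*θ^2) ≤ 2*r^2*(1-Real.cos θ) :=
        mul_le_mul_of_nonneg_left (by linarith) (by positivity)
      linear_combination h5
  have hval : ∫ θ in (-π)..π, ((1-r^2)^2 + (4*r^2/π^2)*θ^2)⁻¹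
      ≤ π^2/(2*r*(1-r^2)) := by
    rw [int_inv_quad hε hk, hsk]
    have h1 : Real.arctan (2*r/π * π/(1-r^2)) < π/2 := Real.arctan_lt_pi_div_two _
    have h2 : -(π/2) < Real.arctan (2*r/π * (-π)/(1-r^2)) := Real.neg_pi_div_two_lt_arctan _
    have h3 : (0:ℝ) < (1-r^2) * (2*r/π) := by positivity
    rw [div_eq_mul_inv (π^2)]
    have : Real.arctan (2*r/π * π/(1-r^2)) - Real.arctan (2*r/π * (-π)/(1-r^2)) ≤ π := by
      linarith
    calc ((1-r^2) * (2*r/π))⁻¹ *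
          (Real.arctan (2*r/π * π/(1-r^2)) - Real.arctan (2*r/π * (-π)/(1-r^2)))
        ≤ ((1-r^2) * (2*r/π))⁻¹ * π := by
          apply mul_le_mul_of_nonneg_left this (by positivity)
      _ = π^2 * (2*r*(1-r^2))⁻¹ := by
          field_simp
  have : Bf r ≤ π^2/(2*r*(1-r^2)) := le_trans hmono hval
  calc (1-r^2) * Bf r ≤ (1-r^2) * (π^2/(2*r*(1-r^2))) := by
        apply mul_le_mul_of_nonneg_left this hε.le
    _ = π^2/(2*r) := by field_simp
    _ ≤ π^2 := by
        rw [div_le_iff₀ (by linarith)]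
        nlinarith [mul_nonneg (sq_nonneg π) (by linarith : (0:ℝ) ≤ 2*r-1)]

open Real in
lemma Bf_nonneg {r : ℝ} : 0 ≤ Bf r := by
  apply intervalIntegral.integral_nonneg (by linarith [pi_pos])
  intro θ _; positivity

open Real in
lemma Af_lower {r : ℝ} (hr : 1/2 < r) (hr1 : r < 1) :
    2 * Real.log (1/(1-r^2)) ≤ Af r := by
  have hr0 : 0 < r := by linarith
  have hε : 0 < 1 - r^2 := by nlinarith
  have hmono : (∫ θ in (-π)..π, (Real.sqrt ((1-r^2)^2 + 1*θ^2))⁻¹) ≤ Af r := by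
    rw [Af]
    apply intervalIntegral.integral_mono_on (by linarith [pi_pos])
    · exact Continuous.intervalIntegrable
        ((Real.continuous_sqrt.comp (by continuity)).inv₀
          (fun θ => (Real.sqrt_pos.2 (by nlinarith [sq_nonneg θ])).ne')) _ _
    · exact Continuous.intervalIntegrable
        ((qf_cont r).inv₀ (fun θ => (qf_pos hr0 hr1 θ).ne')) _ _
    · intro θ hθ
      have hcos := Real.one_sub_sq_div_two_le_cos (x := θ)
      have hcos1 := Real.cos_le_one θ
      apply inv_anti₀ (qf_pos hr0 hr1 θ)
      rw [Qf]
      apply Real.sqrt_le_sqrt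
      nlinarith [sq_nonneg r, sq_nonneg θ]
  rw [int_inv_sqrt hε one_pos] at hmono
  rw [Real.sqrt_one] at hmono
  simp only [inv_one, one_mul] at hmono
  have hneg : Real.arsinh (-π/(1-r^2)) = - Real.arsinh (π/(1-r^2)) := by
    rw [show -π/(1-r^2) = -(π/(1-r^2)) by ring, Real.arsinh_neg]
  rw [hneg] at hmono
  have h1 : Real.log (1/(1-r^2)) ≤ Real.log (2*(π/(1-r^2))) := by
    apply Real.log_le_log (by positivity)
    have h2π : (1:ℝ) ≤ 2*π := by nlinarith [Real.pi_gt_three]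
    calc 1/(1-r^2) ≤ (2*π)/(1-r^2) := by gcongr
      _ = 2*(π/(1-r^2)) := by ring
  have h2 := log_le_arsinh (x := π/(1-r^2)) (by positivity)
  linarith

set_option maxHeartbeats 1000000 in
open Real in
lemma Af_upper {r δ : ℝ} (hr : 1/2 < r) (hr1 : r < 1) (hδ0 : 0 < δ) (hδ1 : δ ≤ 1) :
    Af r ≤ (Real.sqrt (r^2*(1-δ^2/8)))⁻¹ * 2 * (Real.log 3 + Real.log (1/(1-r^2)))
      + (π/r) * Real.log (π/δ) := by
  have hr0 : 0 < r := by linarith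
  have hε : 0 < 1 - r^2 := by nlinarith
  have hε1 : 1 - r^2 ≤ 1 := by nlinarith
  have hδπ : δ ≤ π := by linarith [pi_gt_three]
  have hc : 0 < r^2*(1-δ^2/8) := by nlinarith
  have hc1 : r^2*(1-δ^2/8) ≤ 1 := by nlinarith
  have hsc1 : Real.sqrt (r^2*(1-δ^2/8)) ≤ 1 :=
    (Real.sqrt_le_sqrt hc1).trans_eq Real.sqrt_one
  have hsc0 : 0 < Real.sqrt (r^2*(1-δ^2/8)) := Real.sqrt_pos.2 hc
  set c := r^2*(1-δ^2/8) with hcdef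
  have hQint : ∀ a b : ℝ, IntervalIntegrable (fun θ => (Qf r θ)⁻¹) volume a b :=
    fun a b => Continuous.intervalIntegrable
      ((qf_cont r).inv₀ (fun θ => (qf_pos hr0 hr1 θ).ne')) a b
  -- lower bound on Qf for |θ| between: Qf ≥ (2r/π)|θ|
  have hQtail : ∀ θ : ℝ, |θ| ≤ π → (2*r/π) * |θ| ≤ Qf r θ := by
    intro θ habs
    have hcos := Real.cos_le_one_sub_mul_cos_sq habs
    have hcge : (0:ℝ) ≤ 1 - Real.cos θ := by linarith [Real.cos_le_one θ]
    rw [Qf, Real.le_sqrt (by positivity)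
      (by nlinarith [sq_nonneg (1-r^2), mul_nonneg (sq_nonneg r) hcge])]
    have h5 : 2*r^2*((2/π^2)*θ^2) ≤ 2*r^2*(1-Real.cos θ) :=
      mul_le_mul_of_nonneg_left (by linarith) (by positivity)
    have h6 : ((2*r/π) * |θ|)^2 = 2*r^2*((2/π^2)*θ^2) := by
      rw [mul_pow, sq_abs]; field_simp
    nlinarith [sq_nonneg (1-r^2)]
  -- tail bound function
  have htail_int : ∀ a b : ℝ, (0 < a ∨ b < 0) → True := fun _ _ _ => trivial
  -- I3 bound
  have hI3 : (∫ θ in δ..π, (Qf r θ)⁻¹) ≤ (π/(2*r)) * Real.log (π/δ) := by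
    have hmono : (∫ θ in δ..π, (Qf r θ)⁻¹) ≤ ∫ θ in δ..π, (π/(2*r)) * θ⁻¹ := by
      apply intervalIntegral.integral_mono_on hδπ (hQint _ _)
      · apply ContinuousOn.intervalIntegrable
        apply ContinuousOn.mul continuousOn_const
        apply ContinuousOn.inv₀ continuousOn_id
        intro x hx
        rw [Set.uIcc_of_le hδπ] at hx
        exact ne_of_gt (lt_of_lt_of_le hδ0 hx.1)
      · intro θ hθ
        have hθ0 : 0 < θ := lt_of_lt_of_le hδ0 hθ.1
        have habs : |θ| ≤ π := by rw [abs_of_pos hθ0]; exact hθ.2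
        have := hQtail θ habs
        rw [abs_of_pos hθ0] at this
        rw [show (π/(2*r)) * θ⁻¹ = ((2*r/π)*θ)⁻¹ by field_simp]
        exact inv_anti₀ (by positivity) this
    rw [intervalIntegral.integral_const_mul, integral_inv_of_pos hδ0 pi_pos] at hmono
    exact hmono
  -- I1 bound
  have hI1 : (∫ θ in (-π)..(-δ), (Qf r θ)⁻¹) ≤ (π/(2*r)) * Real.log (π/δ) := by
    have hmono : (∫ θ in (-π)..(-δ), (Qf r θ)⁻¹) ≤ ∫ θ in (-π)..(-δ), (π/(2*r)) * (-θ)⁻¹ := by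
      apply intervalIntegral.integral_mono_on (by linarith) (hQint _ _)
      · apply ContinuousOn.intervalIntegrable
        apply ContinuousOn.mul continuousOn_const
        apply ContinuousOn.inv₀ (continuousOn_id.neg)
        intro x hx
        rw [Set.uIcc_of_le (by linarith : -π ≤ -δ)] at hx
        have : x ≤ -δ := hx.2
        intro hcon
        nlinarith [neg_eq_zero.1 (show -x = 0 from hcon)]
      · intro θ hθ
        have hθ0 : θ < 0 := lt_of_le_of_lt hθ.2 (by linarith)
        have habs : |θ| ≤ π := by rw [abs_of_neg hθ0]; linarith [hθ.1]
        have := hQtail θ habs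
        rw [abs_of_neg hθ0] at this
        rw [show (π/(2*r)) * (-θ)⁻¹ = ((2*r/π)*(-θ))⁻¹ by field_simp]
        exact inv_anti₀ (mul_pos (by positivity) (by linarith : (0:ℝ) < -θ)) this
    have hcomp : (∫ θ in (-π)..(-δ), (-θ)⁻¹) = ∫ θ in δ..π, θ⁻¹ := by
      have := intervalIntegral.integral_comp_neg (a := -π) (b := -δ) (fun x : ℝ => x⁻¹)
      simpa using this
    rw [intervalIntegral.integral_const_mul, hcomp, integral_inv_of_pos hδ0 pi_pos] at hmono
    exact hmono
  -- I2 bound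
  have hI2 : (∫ θ in (-δ)..δ, (Qf r θ)⁻¹)
      ≤ (Real.sqrt c)⁻¹ * 2 * (Real.log 3 + Real.log (1/(1-r^2))) := by
    have hmono : (∫ θ in (-δ)..δ, (Qf r θ)⁻¹)
        ≤ ∫ θ in (-δ)..δ, (Real.sqrt ((1-r^2)^2 + c*θ^2))⁻¹ := by
      apply intervalIntegral.integral_mono_on (by linarith) (hQint _ _)
      · exact Continuous.intervalIntegrable
          ((Real.continuous_sqrt.comp
            (continuous_const.add (continuous_const.mul (continuous_pow 2)))).inv₀
            (fun θ => (Real.sqrt_pos.2 (by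
              show (0:ℝ) < (1-r^2)^2 + c*θ^2
              have h7 := mul_nonneg hc.le (sq_nonneg θ)
              nlinarith [pow_pos hε 2])).ne')) _ _
      · intro θ hθ
        have habs : |θ| ≤ δ := abs_le.2 ⟨hθ.1, hθ.2⟩
        have hq := cos_quad_lower hδ1 habs
        apply inv_anti₀ (Real.sqrt_pos.2 (by
          show (0:ℝ) < (1-r^2)^2 + c*θ^2
          have h7 := mul_nonneg hc.le (sq_nonneg θ)
          nlinarith [pow_pos hε 2]))
        rw [Qf]
        apply Real.sqrt_le_sqrt
        have h8 : r^2*(θ^2*(1-δ^2/8)) ≤ r^2*(2*(1-Real.cos θ)) :=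
          mul_le_mul_of_nonneg_left hq (by positivity)
        have h9 : c*θ^2 = r^2*(θ^2*(1-δ^2/8)) := by rw [hcdef]; ring
        nlinarith [h8, h9]
    rw [int_inv_sqrt hε hc] at hmono
    have hneg : Real.arsinh (Real.sqrt c * (-δ)/(1-r^2))
        = - Real.arsinh (Real.sqrt c * δ/(1-r^2)) := by
      rw [show Real.sqrt c * (-δ)/(1-r^2) = -(Real.sqrt c * δ/(1-r^2)) by ring,
        Real.arsinh_neg]
    rw [hneg] at hmono
    have hx0 : 0 ≤ Real.sqrt c * δ/(1-r^2) := by positivity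
    have hup := arsinh_le_log hx0
    have hlog : Real.log (2*(Real.sqrt c * δ/(1-r^2)) + 1)
        ≤ Real.log 3 + Real.log (1/(1-r^2)) := by
      rw [← Real.log_mul (by norm_num) (by positivity)]
      apply Real.log_le_log (by positivity)
      have h1 : Real.sqrt c * δ ≤ 1 := by
        calc Real.sqrt c * δ ≤ 1*1 := mul_le_mul hsc1 hδ1 hδ0.le one_pos.le
          _ = 1 := by norm_num
      have h2 : (1:ℝ) ≤ 1/(1-r^2) := by rw [le_div_iff₀ hε]; linarith
      have h3 : Real.sqrt c * δ/(1-r^2) ≤ 1/(1-r^2) := by gcongr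
      linarith
    have harsinh : Real.arsinh (Real.sqrt c * δ/(1-r^2))
        ≤ Real.log 3 + Real.log (1/(1-r^2)) := le_trans hup hlog
    calc (∫ θ in (-δ)..δ, (Qf r θ)⁻¹)
        ≤ (Real.sqrt c)⁻¹ * (Real.arsinh (Real.sqrt c * δ/(1-r^2))
            - - Real.arsinh (Real.sqrt c * δ/(1-r^2))) := hmono
      _ = (Real.sqrt c)⁻¹ * 2 * Real.arsinh (Real.sqrt c * δ/(1-r^2)) := by ring
      _ ≤ (Real.sqrt c)⁻¹ * 2 * (Real.log 3 + Real.log (1/(1-r^2))) := by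
          apply mul_le_mul_of_nonneg_left harsinh (by positivity)
  -- assemble
  have e1 := intervalIntegral.integral_add_adjacent_intervals
    (hQint (-π) (-δ)) (hQint (-δ) δ)
  have e2 := intervalIntegral.integral_add_adjacent_intervals
    (hQint (-π) δ) (hQint δ π)
  have hAf : Af r = (∫ θ in (-π)..(-δ), (Qf r θ)⁻¹) + (∫ θ in (-δ)..δ, (Qf r θ)⁻¹)
      + (∫ θ in δ..π, (Qf r θ)⁻¹) := by
    rw [Af, ← e2, ← e1]
  rw [hAf]
  have : (π/(2*r)) * Real.log (π/δ) + (π/(2*r)) * Real.log (π/δ) = (π/r) * Real.log (π/δ) := by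
    field_simp; ring
  linarith

noncomputable def Lfun (r : ℝ) : ℝ := Real.log (1/(1-r))
noncomputable def lfun (r : ℝ) : ℝ := Real.log (1/(1-r^2))
noncomputable def dfun (r : ℝ) : ℝ := (1 + lfun r)⁻¹

lemma hmem_ev : ∀ᶠ r in nhdsWithin (1:ℝ) (Set.Iio 1), r ∈ Set.Ioo (1/2:ℝ) 1 :=
  Ioo_mem_nhdsLT_of_mem (⟨by norm_num, le_refl 1⟩ : (1:ℝ) ∈ Set.Ioc (1/2) 1)

lemma Lfun_pos {r : ℝ} (hr : 1/2 < r) (hr1 : r < 1) : 0 < Lfun r := by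
  rw [Lfun]
  apply Real.log_pos
  rw [lt_div_iff₀ (by linarith)]
  linarith

lemma lfun_nonneg {r : ℝ} (hr : 1/2 < r) (hr1 : r < 1) : 0 ≤ lfun r := by
  rw [lfun]
  apply Real.log_nonneg
  rw [le_div_iff₀ (by nlinarith)]
  nlinarith

lemma tendsto_Lfun : Tendsto Lfun (nhdsWithin (1:ℝ) (Set.Iio 1)) atTop := by
  have h1 : Tendsto (fun r : ℝ => 1-r) (nhdsWithin (1:ℝ) (Set.Iio 1)) (nhdsWithin 0 (Set.Ioi 0)) := by
    apply tendsto_nhdsWithin_of_tendsto_nhds_of_eventually_within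
    · have : Tendsto (fun r : ℝ => 1-r) (nhds 1) (nhds (1-1)) :=
        (Continuous.tendsto (f := fun r : ℝ => 1-r) (by continuity) 1)
      rw [show (1:ℝ)-1 = 0 by norm_num] at this
      exact this.mono_left nhdsWithin_le_nhds
    · exact eventually_mem_nhdsWithin.mono (fun r hr => by
        simp only [Set.mem_Iio] at hr; simp only [Set.mem_Ioi]; linarith)
  have h2 : Tendsto (fun r : ℝ => (1-r)⁻¹) (nhdsWithin (1:ℝ) (Set.Iio 1)) atTop :=
    tendsto_inv_nhdsGT_zero.comp h1
  have h3 := Real.tendsto_log_atTop.comp h2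
  apply h3.congr
  intro r
  simp only [Function.comp_apply, Lfun, one_div]

lemma tendsto_lfun : Tendsto lfun (nhdsWithin (1:ℝ) (Set.Iio 1)) atTop := by
  have h1 : Tendsto (fun r : ℝ => 1-r^2) (nhdsWithin (1:ℝ) (Set.Iio 1)) (nhdsWithin 0 (Set.Ioi 0)) := by
    apply tendsto_nhdsWithin_of_tendsto_nhds_of_eventually_within
    · have : Tendsto (fun r : ℝ => 1-r^2) (nhds 1) (nhds (1-1^2)) :=
        (Continuous.tendsto (f := fun r : ℝ => 1-r^2) (by continuity) 1)
      rw [show (1:ℝ)-1^2 = 0 by norm_num] at this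
      exact this.mono_left nhdsWithin_le_nhds
    · exact hmem_ev.mono (fun r hr => by
        simp only [Set.mem_Ioo] at hr; simp only [Set.mem_Ioi]; nlinarith [hr.1, hr.2])
  have h2 : Tendsto (fun r : ℝ => (1-r^2)⁻¹) (nhdsWithin (1:ℝ) (Set.Iio 1)) atTop :=
    tendsto_inv_nhdsGT_zero.comp h1
  have h3 := Real.tendsto_log_atTop.comp h2
  apply h3.congr
  intro r
  simp only [Function.comp_apply, lfun, one_div]

lemma tendsto_invL : Tendsto (fun r => (Lfun r)⁻¹) (nhdsWithin (1:ℝ) (Set.Iio 1)) (nhds 0) :=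
  tendsto_inv_atTop_zero.comp tendsto_Lfun

lemma tendsto_id1 : Tendsto (fun r : ℝ => r) (nhdsWithin (1:ℝ) (Set.Iio 1)) (nhds 1) :=
  Filter.tendsto_id.mono_left nhdsWithin_le_nhds

lemma tendsto_ratio :
    Tendsto (fun r => lfun r * (Lfun r)⁻¹) (nhdsWithin (1:ℝ) (Set.Iio 1)) (nhds 1) := by
  have hlog2 : Tendsto (fun r : ℝ => Real.log (1+r)) (nhdsWithin (1:ℝ) (Set.Iio 1))
      (nhds (Real.log 2)) := by
    have h2 : Tendsto (fun r : ℝ => 1+r) (nhdsWithin (1:ℝ) (Set.Iio 1)) (nhds 2) := by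
      have := tendsto_const_nhds (x := (1:ℝ)) (f := nhdsWithin (1:ℝ) (Set.Iio 1))
      have h := this.add tendsto_id1
      norm_num at h
      exact h
    exact ((Real.continuousAt_log (by norm_num)).tendsto).comp h2
  have hmain : Tendsto (fun r => 1 - Real.log (1+r) * (Lfun r)⁻¹)
      (nhdsWithin (1:ℝ) (Set.Iio 1)) (nhds 1) := by
    have := tendsto_const_nhds (x := (1:ℝ)) (f := nhdsWithin (1:ℝ) (Set.Iio 1))
    have h := this.sub (hlog2.mul tendsto_invL)
    norm_num at h
    exact h
  apply hmain.congr'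
  filter_upwards [hmem_ev] with r hr
  obtain ⟨hr2, hr1⟩ := hr
  have h1r : (1:ℝ)-r ≠ 0 := by intro h; rw [sub_eq_zero] at h; exact absurd h.symm hr1.ne
  have h1r' : (1:ℝ)+r ≠ 0 := by positivity
  have hLpos := Lfun_pos hr2 hr1
  have hlf : lfun r = Lfun r - Real.log (1+r) := by
    rw [lfun, Lfun, one_div, one_div, Real.log_inv, Real.log_inv,
      show (1:ℝ)-r^2 = (1-r)*(1+r) by ring, Real.log_mul h1r h1r']
    ring
  rw [hlf]
  field_simp

lemma tendsto_one_add_lfun :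
    Tendsto (fun r => 1 + lfun r) (nhdsWithin (1:ℝ) (Set.Iio 1)) atTop :=
  tendsto_atTop_add_const_left _ 1 tendsto_lfun

lemma tendsto_dfun : Tendsto dfun (nhdsWithin (1:ℝ) (Set.Iio 1)) (nhds 0) :=
  tendsto_inv_atTop_zero.comp tendsto_one_add_lfun

open Real in
lemma tendsto_logd :
    Tendsto (fun r => Real.log (π/dfun r) * (Lfun r)⁻¹)
      (nhdsWithin (1:ℝ) (Set.Iio 1)) (nhds 0) := by
  have hsmall : Tendsto (fun x : ℝ => Real.log x / x) atTop (nhds 0) :=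
    Real.isLittleO_log_id_atTop.tendsto_div_nhds_zero
  have h1 : Tendsto (fun r => Real.log (1+lfun r) / (1+lfun r))
      (nhdsWithin (1:ℝ) (Set.Iio 1)) (nhds 0) := hsmall.comp tendsto_one_add_lfun
  have h2 : Tendsto (fun r => (1+lfun r) * (Lfun r)⁻¹)
      (nhdsWithin (1:ℝ) (Set.Iio 1)) (nhds 1) := by
    have h := tendsto_invL.add tendsto_ratio
    norm_num at h
    exact h.congr (fun r => by ring)
  have h3 : Tendsto (fun r => Real.log (1+lfun r) * (Lfun r)⁻¹)
      (nhdsWithin (1:ℝ) (Set.Iio 1)) (nhds 0) := by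
    have h := h1.mul h2
    norm_num at h
    apply h.congr'
    filter_upwards [hmem_ev] with r hr
    have hpos : 0 < 1 + lfun r := by linarith [lfun_nonneg hr.1 hr.2]
    field_simp
  have h4 : Tendsto (fun r => Real.log π * (Lfun r)⁻¹ + Real.log (1+lfun r) * (Lfun r)⁻¹)
      (nhdsWithin (1:ℝ) (Set.Iio 1)) (nhds 0) := by
    have h := (tendsto_invL.const_mul (Real.log π)).add h3
    norm_num at h
    exact h
  apply h4.congr'
  filter_upwards [hmem_ev] with r hr
  have hpos : 0 < 1 + lfun r := by linarith [lfun_nonneg hr.1 hr.2]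
  have hd : π/dfun r = π * (1+lfun r) := by
    rw [dfun, div_inv_eq_mul]
  rw [hd, Real.log_mul (by positivity) (by positivity)]
  ring

theorem hypIntegral_asymp_half :
    Tendsto (fun r : ℝ => hypIntegral (1/2) r / (4 * (1 - r) * Real.log (1 / (1 - r))))
      (nhdsWithin 1 (Set.Iio 1)) (nhds 1) := by
  have hhalf : Tendsto (fun r : ℝ => (1+r)/(4*r^2)) (nhdsWithin (1:ℝ) (Set.Iio 1)) (nhds (1/2)) := by
    have hnum : Tendsto (fun r : ℝ => 1+r) (nhdsWithin (1:ℝ) (Set.Iio 1)) (nhds 2) := by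
      have h := (tendsto_const_nhds (x := (1:ℝ))
        (f := nhdsWithin (1:ℝ) (Set.Iio 1))).add tendsto_id1
      norm_num at h; exact h
    have hden : Tendsto (fun r : ℝ => 4*r^2) (nhdsWithin (1:ℝ) (Set.Iio 1)) (nhds 4) := by
      have h := (tendsto_id1.pow 2).const_mul (4:ℝ)
      norm_num at h; exact h
    have h := hnum.div hden (by norm_num)
    norm_num at h; exact h
  -- lower bound function tendsto
  have hlowT : Tendsto (fun r : ℝ => (1+r)/(4*r^2) * (2*(lfun r * (Lfun r)⁻¹)))
      (nhdsWithin (1:ℝ) (Set.Iio 1)) (nhds 1) := by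
    have h := hhalf.mul (tendsto_ratio.const_mul (2:ℝ))
    norm_num at h; exact h
  -- upper bound function tendsto
  have hc : Tendsto (fun r : ℝ => r^2*(1-(dfun r)^2/8)) (nhdsWithin (1:ℝ) (Set.Iio 1)) (nhds 1) := by
    have h := (tendsto_id1.pow 2).mul
      ((tendsto_const_nhds (x := (1:ℝ)) (f := nhdsWithin (1:ℝ) (Set.Iio 1))).sub
        ((tendsto_dfun.pow 2).div_const 8))
    norm_num at h; exact h
  have hsq : Tendsto (fun r : ℝ => Real.sqrt (r^2*(1-(dfun r)^2/8)))
      (nhdsWithin (1:ℝ) (Set.Iio 1)) (nhds 1) := by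
    have h := (Real.continuous_sqrt.tendsto 1).comp hc
    rw [Real.sqrt_one] at h
    exact h
  have hsqi : Tendsto (fun r : ℝ => (Real.sqrt (r^2*(1-(dfun r)^2/8)))⁻¹)
      (nhdsWithin (1:ℝ) (Set.Iio 1)) (nhds 1) := by
    have h := hsq.inv₀ one_ne_zero
    rw [inv_one] at h
    exact h
  have hX : Tendsto (fun r : ℝ => (Real.log 3 + lfun r) * (Lfun r)⁻¹)
      (nhdsWithin (1:ℝ) (Set.Iio 1)) (nhds 1) := by
    have h := (tendsto_invL.const_mul (Real.log 3)).add tendsto_ratio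
    norm_num at h
    exact h.congr (fun r => by ring)
  have hπr : Tendsto (fun r : ℝ => π/r) (nhdsWithin (1:ℝ) (Set.Iio 1)) (nhds π) := by
    have h := (tendsto_const_nhds (x := π)
      (f := nhdsWithin (1:ℝ) (Set.Iio 1))).div tendsto_id1 one_ne_zero
    rw [div_one] at h
    exact h
  have hupT : Tendsto (fun r : ℝ => (1+r)/(4*r^2) *
      ((Real.sqrt (r^2*(1-(dfun r)^2/8)))⁻¹*2*((Real.log 3 + lfun r) * (Lfun r)⁻¹)
        + (π/r)*(Real.log (π/dfun r) * (Lfun r)⁻¹) + π^2*(Lfun r)⁻¹))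
      (nhdsWithin (1:ℝ) (Set.Iio 1)) (nhds 1) := by
    have ht1 := (hsqi.mul (tendsto_const_nhds (x := (2:ℝ))
      (f := nhdsWithin (1:ℝ) (Set.Iio 1)))).mul hX
    have ht2 := hπr.mul tendsto_logd
    have ht3 := tendsto_invL.const_mul (π^2)
    have h := hhalf.mul ((ht1.add ht2).add ht3)
    norm_num at h
    exact h
  apply tendsto_of_tendsto_of_tendsto_of_le_of_le' hlowT hupT
  · -- low ≤ f
    filter_upwards [hmem_ev] with r hr
    obtain ⟨hr2, hr1⟩ := hr
    have hr0 : 0 < r := by linarith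
    have hε : 0 < 1 - r^2 := by nlinarith
    have h1r : 0 < 1 - r := by linarith
    have hLpos := Lfun_pos hr2 hr1
    have hfr : hypIntegral (1/2) r / (4*(1-r)*Real.log (1/(1-r)))
        = (1+r)/(4*r^2) * ((Af r + (1-r^2)*Bf r) * (Lfun r)⁻¹) := by
      rw [hyp_rewrite hr0 hr1, show Real.log (1/(1-r)) = Lfun r from rfl]
      field_simp
      ring
    rw [hfr]
    apply mul_le_mul_of_nonneg_left _ (by positivity)
    have hAf := Af_lower hr2 hr1
    have hBf := mul_nonneg hε.le (Bf_nonneg (r := r))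
    calc 2*(lfun r*(Lfun r)⁻¹) = (2*Real.log (1/(1-r^2)))*(Lfun r)⁻¹ := by rw [lfun]; ring
      _ ≤ (Af r + (1-r^2)*Bf r)*(Lfun r)⁻¹ := by
          apply mul_le_mul_of_nonneg_right _ (inv_nonneg.2 hLpos.le)
          linarith
  · -- f ≤ up
    filter_upwards [hmem_ev] with r hr
    obtain ⟨hr2, hr1⟩ := hr
    have hr0 : 0 < r := by linarith
    have hε : 0 < 1 - r^2 := by nlinarith
    have h1r : 0 < 1 - r := by linarith
    have hLpos := Lfun_pos hr2 hr1
    have hlf0 := lfun_nonneg hr2 hr1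
    have hd0 : 0 < dfun r := by rw [dfun]; exact inv_pos.2 (by linarith)
    have hd1 : dfun r ≤ 1 := by
      rw [dfun]
      apply inv_le_one_of_one_le₀
      linarith
    have hfr : hypIntegral (1/2) r / (4*(1-r)*Real.log (1/(1-r)))
        = (1+r)/(4*r^2) * ((Af r + (1-r^2)*Bf r) * (Lfun r)⁻¹) := by
      rw [hyp_rewrite hr0 hr1, show Real.log (1/(1-r)) = Lfun r from rfl]
      field_simp
      ring
    rw [hfr]
    apply mul_le_mul_of_nonneg_left _ (by positivity)
    have hAf := Af_upper hr2 hr1 hd0 hd1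
    have hBf := Bf_bound hr2 hr1
    have hS : Af r + (1-r^2)*Bf r
        ≤ (Real.sqrt (r^2*(1-(dfun r)^2/8)))⁻¹*2*(Real.log 3 + lfun r)
          + (π/r)*Real.log (π/dfun r) + π^2 := by
      rw [lfun]
      linarith
    calc (Af r + (1-r^2)*Bf r) * (Lfun r)⁻¹
        ≤ ((Real.sqrt (r^2*(1-(dfun r)^2/8)))⁻¹*2*(Real.log 3 + lfun r)
            + (π/r)*Real.log (π/dfun r) + π^2) * (Lfun r)⁻¹ :=
          mul_le_mul_of_nonneg_right hS (inv_nonneg.2 hLpos.le)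
      _ = (Real.sqrt (r^2*(1-(dfun r)^2/8)))⁻¹*2*((Real.log 3 + lfun r) * (Lfun r)⁻¹)
            + (π/r)*(Real.log (π/dfun r) * (Lfun r)⁻¹) + π^2*(Lfun r)⁻¹ := by ring
end

section
/- lim_{L→∞} L^{3/2} · Σ_{n=1}^∞ Γ(Ln − 1/2)/Γ(Ln + 1) = ζ(3/2), where ζ is the Riemann zeta function; equivalently, lim_{L→∞} L^{3/2} ∫₀^∞ (1/((1+x²)^L − 1)) · (x²/(1+x²)) dx = (√π/4) ζ(3/2). -/
open Filter

namespace LimitAux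

open Real Set MeasureTheory

lemma gamma_mid {a b : ℝ} (ha : 0 < a) (hb : 0 < b) :
    Real.Gamma ((a+b)/2) ≤ Real.sqrt (Real.Gamma a * Real.Gamma b) := by
  have h := Real.convexOn_log_Gamma.2 (Set.mem_Ioi.mpr ha) (Set.mem_Ioi.mpr hb)
    (by norm_num : (0:ℝ) ≤ 1/2) (by norm_num : (0:ℝ) ≤ 1/2) (by norm_num)
  simp only [Function.comp, smul_eq_mul] at h
  have hmid : (1/2 : ℝ) * a + (1/2) * b = (a+b)/2 := by ring
  rw [hmid] at h
  have hga := Real.Gamma_pos_of_pos ha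
  have hgb := Real.Gamma_pos_of_pos hb
  have hmidpos : 0 < (a+b)/2 := by linarith
  have hgm := Real.Gamma_pos_of_pos hmidpos
  have : Real.log (Real.Gamma ((a+b)/2)) ≤ Real.log (Real.sqrt (Real.Gamma a * Real.Gamma b)) := by
    rw [Real.log_sqrt (by positivity), Real.log_mul (ne_of_gt hga) (ne_of_gt hgb)]
    linarith
  exact (Real.log_le_log_iff hgm (Real.sqrt_pos.mpr (by positivity))).mp this


lemma gamma_ratio_upper {x : ℝ} (hx : 1 < x) :
    Real.Gamma (x - 1/2) / Real.Gamma (x + 1) ≤ 1 / (x * Real.sqrt (x - 1)) := by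
  have hy : (0:ℝ) < x - 1 := by linarith
  have hx0 : (0:ℝ) < x := by linarith
  have hgy := Real.Gamma_pos_of_pos hy
  -- Γ(x - 1/2) ≤ Γ(x-1) * √(x-1)
  have h1 : Real.Gamma (x - 1/2) ≤ Real.Gamma (x - 1) * Real.sqrt (x - 1) := by
    have := gamma_mid hy (by linarith : (0:ℝ) < x)
    have hmid : ((x - 1) + x)/2 = x - 1/2 := by ring
    rw [hmid] at this
    have hgx : Real.Gamma x = (x - 1) * Real.Gamma (x - 1) := by
      have := Real.Gamma_add_one (ne_of_gt hy)
      rw [show x - 1 + 1 = x by ring] at this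
      linarith [this]
    calc Real.Gamma (x - 1/2) ≤ Real.sqrt (Real.Gamma (x-1) * Real.Gamma x) := this
      _ = Real.Gamma (x-1) * Real.sqrt (x-1) := by
          rw [hgx, show Real.Gamma (x-1) * ((x-1) * Real.Gamma (x-1))
              = (Real.Gamma (x-1))^2 * (x-1) by ring, Real.sqrt_mul (by positivity),
            Real.sqrt_sq hgy.le]
  -- Γ(x+1) = x * (x-1) * Γ(x-1)
  have h2 : Real.Gamma (x + 1) = x * ((x - 1) * Real.Gamma (x - 1)) := by
    rw [Real.Gamma_add_one (ne_of_gt hx0)]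
    have := Real.Gamma_add_one (ne_of_gt hy)
    rw [show x - 1 + 1 = x by ring] at this
    rw [this]
  rw [h2, div_le_div_iff₀ (by positivity) (by positivity)]
  have hs : Real.sqrt (x-1) * Real.sqrt (x-1) = x - 1 := Real.mul_self_sqrt hy.le
  calc Real.Gamma (x - 1/2) * (x * Real.sqrt (x-1))
      ≤ (Real.Gamma (x-1) * Real.sqrt (x-1)) * (x * Real.sqrt (x-1)) := by
        apply mul_le_mul_of_nonneg_right h1 (by positivity)
    _ = 1 * (x * ((x-1) * Real.Gamma (x-1))) := by
        rw [show Real.Gamma (x-1) * Real.sqrt (x-1) * (x * Real.sqrt (x-1))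
          = (Real.sqrt (x-1) * Real.sqrt (x-1)) * (x * Real.Gamma (x-1)) by ring, hs]
        ring

lemma gamma_ratio_lower {x : ℝ} (hx : 1 < x) :
    1 / (x * Real.sqrt (x - 1/2)) ≤ Real.Gamma (x - 1/2) / Real.Gamma (x + 1) := by
  have hy : (0:ℝ) < x - 1/2 := by linarith
  have hx0 : (0:ℝ) < x := by linarith
  have hgy := Real.Gamma_pos_of_pos hy
  have hgx := Real.Gamma_pos_of_pos hx0
  -- Γ(x) ≤ Γ(x-1/2) * √(x-1/2)
  have h1 : Real.Gamma x ≤ Real.Gamma (x - 1/2) * Real.sqrt (x - 1/2) := by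
    have := gamma_mid hy (by linarith : (0:ℝ) < x + 1/2)
    rw [show ((x - 1/2) + (x + 1/2))/2 = x by ring] at this
    have hg2 : Real.Gamma (x + 1/2) = (x - 1/2) * Real.Gamma (x - 1/2) := by
      have := Real.Gamma_add_one (ne_of_gt hy)
      rw [show x - 1/2 + 1 = x + 1/2 by ring] at this
      linarith [this]
    calc Real.Gamma x ≤ Real.sqrt (Real.Gamma (x-1/2) * Real.Gamma (x+1/2)) := this
      _ = Real.Gamma (x-1/2) * Real.sqrt (x-1/2) := by
          rw [hg2, show Real.Gamma (x-1/2) * ((x-1/2) * Real.Gamma (x-1/2))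
              = (Real.Gamma (x-1/2))^2 * (x-1/2) by ring, Real.sqrt_mul (by positivity),
            Real.sqrt_sq hgy.le]
  have h2 : Real.Gamma (x + 1) = x * Real.Gamma x := Real.Gamma_add_one (ne_of_gt hx0)
  rw [h2, div_le_div_iff₀ (by positivity) (by positivity)]
  have hs : Real.sqrt (x-1/2) * Real.sqrt (x-1/2) = x - 1/2 := Real.mul_self_sqrt hy.le
  calc (1:ℝ) * (x * Real.Gamma x)
      ≤ 1 * (x * (Real.Gamma (x - 1/2) * Real.sqrt (x - 1/2))) := by
        apply mul_le_mul_of_nonneg_left (mul_le_mul_of_nonneg_left h1 hx0.le) zero_le_one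
    _ = Real.Gamma (x - 1/2) * (x * Real.sqrt (x - 1/2)) := by ring



lemma sqrt_ratio_tendsto {c : ℝ} (hc : 0 ≤ c) :
    Tendsto (fun t : ℝ => Real.sqrt (t / (t - c))) atTop (nhds 1) := by
  have h1 : Tendsto (fun t : ℝ => t / (t - c)) atTop (nhds 1) := by
    have h2 : Tendsto (fun t : ℝ => t - c) atTop atTop :=
      tendsto_atTop_add_const_right atTop (-c) tendsto_id
    have h3 : Tendsto (fun t : ℝ => 1 + c / (t - c)) atTop (nhds (1 + 0)) :=
      tendsto_const_nhds.add (tendsto_const_nhds.div_atTop h2)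
    rw [add_zero] at h3
    apply h3.congr'
    filter_upwards [eventually_gt_atTop c] with t ht
    have : t - c ≠ 0 := by linarith
    field_simp
    ring
  ring
  have := (Real.continuous_sqrt.tendsto 1).comp h1
  simpa [Function.comp_def, div_eq_mul_inv] using this

lemma rpow_three_halves {t : ℝ} (ht : 0 < t) : t ^ ((3:ℝ)/2) = t * Real.sqrt t := by
  rw [show (3:ℝ)/2 = 1 + 1/2 by norm_num, Real.rpow_add ht, Real.rpow_one,
    ← Real.sqrt_eq_rpow]

lemma aux_eq {t c : ℝ} (ht : 0 < t) (htc : c < t) :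
    t ^ ((3:ℝ)/2) * (1 / (t * Real.sqrt (t - c))) = Real.sqrt (t / (t - c)) := by
  rw [rpow_three_halves ht, Real.sqrt_div ht.le]
  have h1 : Real.sqrt (t - c) ≠ 0 := ne_of_gt (Real.sqrt_pos.mpr (by linarith))
  field_simp

lemma gamma_ratio_tendsto :
    Tendsto (fun t : ℝ => t ^ ((3:ℝ)/2) * (Real.Gamma (t - 1/2) / Real.Gamma (t + 1)))
      atTop (nhds 1) := by
  apply tendsto_of_tendsto_of_tendsto_of_le_of_le' (sqrt_ratio_tendsto (by norm_num : (0:ℝ) ≤ 1/2))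
    (sqrt_ratio_tendsto (by norm_num : (0:ℝ) ≤ 1))
  · filter_upwards [eventually_gt_atTop (1:ℝ)] with t ht
    rw [← aux_eq (by linarith) (by linarith)]
    exact mul_le_mul_of_nonneg_left (gamma_ratio_lower ht) (by positivity)
  · filter_upwards [eventually_gt_atTop (1:ℝ)] with t ht
    rw [← aux_eq (by linarith) ht]
    exact mul_le_mul_of_nonneg_left (gamma_ratio_upper ht) (by positivity)


lemma zeta_real (z : ℝ) (hz : (z : ℂ) = riemannZeta (3/2)) :
    z = ∑' n : ℕ, ((n : ℝ) + 1) ^ (-(3:ℝ)/2) := by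
  have h := zeta_eq_tsum_one_div_nat_add_one_cpow (s := 3/2) (by norm_num)
  rw [h] at hz
  have heq : ∀ n : ℕ, (1 / ((n : ℂ) + 1) ^ (3/2 : ℂ)) =
      ((((n : ℝ) + 1) ^ (-(3:ℝ)/2) : ℝ) : ℂ) := by
    intro n
    have hn : (0:ℝ) ≤ (n : ℝ) + 1 := by positivity
    rw [show (-(3:ℝ)/2) = -(3/2 : ℝ) by norm_num, Real.rpow_neg hn,
      Complex.ofReal_inv, Complex.ofReal_cpow hn, one_div]
    push_cast
    norm_num
  rw [tsum_congr heq, ← Complex.ofReal_tsum] at hz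
  exact_mod_cast hz


lemma summable_aux : Summable (fun n : ℕ => ((n : ℝ) + 1) ^ (-(3:ℝ)/2)) := by
  have h : Summable (fun n : ℕ => (n : ℝ) ^ (-(3:ℝ)/2)) :=
    Real.summable_nat_rpow.mpr (by norm_num)
  apply (h.comp_injective Nat.succ_injective).congr
  intro n
  simp [Function.comp, Nat.succ_eq_add_one]

lemma part1' (z : ℝ) (hz : (z : ℂ) = riemannZeta (3/2)) :
    Tendsto (fun L : ℝ => L ^ ((3:ℝ)/2) *
        ∑' n : ℕ, Real.Gamma (L * (n + 1) - 1/2) / Real.Gamma (L * (n + 1) + 1))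
      atTop (nhds z) := by
  rw [zeta_real z hz]
  have hrw : (fun L : ℝ => L ^ ((3:ℝ)/2) *
      ∑' n : ℕ, Real.Gamma (L * (n + 1) - 1/2) / Real.Gamma (L * (n + 1) + 1)) =
      fun L : ℝ => ∑' n : ℕ, L ^ ((3:ℝ)/2) *
        (Real.Gamma (L * (n + 1) - 1/2) / Real.Gamma (L * (n + 1) + 1)) := by
    funext L; rw [tsum_mul_left]
  rw [hrw]
  apply tendsto_tsum_of_dominated_convergence
    (bound := fun n : ℕ => Real.sqrt 2 * ((n : ℝ) + 1) ^ (-(3:ℝ)/2))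
    (summable_aux.mul_left _)
  · -- pointwise limits
    intro k
    set m : ℝ := (k : ℝ) + 1 with hm
    have hm0 : (0:ℝ) < m := by positivity
    have hcomp : Tendsto (fun L : ℝ => L * m) atTop atTop :=
      Tendsto.atTop_mul_const hm0 tendsto_id
    have h1 := (gamma_ratio_tendsto.comp hcomp).const_mul (m ^ (-(3:ℝ)/2))
    rw [mul_one] at h1
    apply h1.congr'
    filter_upwards [eventually_gt_atTop (0:ℝ)] with L hL
    have hmul : (L * m) ^ ((3:ℝ)/2) = L ^ ((3:ℝ)/2) * m ^ ((3:ℝ)/2) :=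
      Real.mul_rpow hL.le hm0.le
    have hcancel : m ^ (-(3:ℝ)/2) * m ^ ((3:ℝ)/2) = 1 := by
      rw [← Real.rpow_add hm0]; norm_num
    simp only [Function.comp]
    rw [hmul]
    calc m ^ (-(3:ℝ)/2) * (L ^ ((3:ℝ)/2) * m ^ ((3:ℝ)/2) *
          (Real.Gamma (L * m - 1/2) / Real.Gamma (L * m + 1)))
        = (m ^ (-(3:ℝ)/2) * m ^ ((3:ℝ)/2)) * (L ^ ((3:ℝ)/2) *
          (Real.Gamma (L * m - 1/2) / Real.Gamma (L * m + 1))) := by ring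
      _ = L ^ ((3:ℝ)/2) * (Real.Gamma (L * m - 1/2) / Real.Gamma (L * m + 1)) := by
          rw [hcancel, one_mul]
  · -- bound
    filter_upwards [eventually_ge_atTop (2:ℝ)] with L hL k
    set m : ℝ := (k : ℝ) + 1 with hm
    have hm1 : (1:ℝ) ≤ m := by simp [hm]
    have hm0 : (0:ℝ) < m := by linarith
    have hL0 : (0:ℝ) < L := by linarith
    set x : ℝ := L * m with hx
    have hx2 : (2:ℝ) ≤ x := by
      calc (2:ℝ) = 2 * 1 := by ring
        _ ≤ L * m := mul_le_mul hL hm1 zero_le_one (by linarith)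
    have hx1 : (1:ℝ) < x := by linarith
    have hx0 : (0:ℝ) < x := by linarith
    have hnorm : ‖L ^ ((3:ℝ)/2) * (Real.Gamma (L * m - 1/2) / Real.Gamma (L * m + 1))‖
        = L ^ ((3:ℝ)/2) * (Real.Gamma (x - 1/2) / Real.Gamma (x + 1)) := by
      rw [Real.norm_eq_abs, abs_of_nonneg]
      have h1 := Real.Gamma_pos_of_pos (show (0:ℝ) < L * m - 1/2 by simp only [← hx]; linarith)
      have h2 := Real.Gamma_pos_of_pos (show (0:ℝ) < L * m + 1 by simp only [← hx]; linarith)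
      positivity
    rw [hnorm]
    have hub := gamma_ratio_upper hx1
    have step1 : L ^ ((3:ℝ)/2) * (Real.Gamma (x - 1/2) / Real.Gamma (x + 1))
        ≤ L ^ ((3:ℝ)/2) * (1 / (x * Real.sqrt (x - 1))) :=
      mul_le_mul_of_nonneg_left hub (by positivity)
    refine step1.trans ?_
    -- L^{3/2} / (x √(x-1)) ≤ √2 * m^{-3/2}
    have hs1 : Real.sqrt x ≤ Real.sqrt 2 * Real.sqrt (x - 1) := by
      rw [← Real.sqrt_mul (by norm_num)]
      exact Real.sqrt_le_sqrt (by linarith)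
    have hx32 : x ^ ((3:ℝ)/2) = L ^ ((3:ℝ)/2) * m ^ ((3:ℝ)/2) := Real.mul_rpow hL0.le hm0.le
    have hxsq : x ^ ((3:ℝ)/2) = x * Real.sqrt x := by
      rw [show (3:ℝ)/2 = 1 + 1/2 by norm_num, Real.rpow_add hx0, Real.rpow_one,
        ← Real.sqrt_eq_rpow]
    have hL32 : (0:ℝ) < L ^ ((3:ℝ)/2) := Real.rpow_pos_of_pos hL0 _
    have hmneg : m ^ (-(3:ℝ)/2) = L ^ ((3:ℝ)/2) / x ^ ((3:ℝ)/2) := by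
      rw [show (-(3:ℝ)/2) = -((3:ℝ)/2) by norm_num, Real.rpow_neg hm0.le, hx32]
      field_simp
    have hx1' : (0:ℝ) < x - 1 := by linarith
    have hsx1 : (0:ℝ) < Real.sqrt (x-1) := Real.sqrt_pos.mpr hx1'
    have hsx : (0:ℝ) < Real.sqrt x := Real.sqrt_pos.mpr hx0
    rw [mul_one_div, hmneg, hxsq, ← mul_div_assoc]
    rw [div_le_div_iff₀ (by positivity) (by positivity)]
    nlinarith [mul_le_mul_of_nonneg_left hs1 (mul_pos hL32 hx0).le,
      Real.sqrt_nonneg (x-1), Real.sqrt_nonneg x]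


lemma image_aux : (fun x : ℝ => x^2 / (1 + x^2)) '' Set.Ioi 0 = Set.Ioo (0:ℝ) 1 := by
  ext u
  constructor
  · rintro ⟨x, hx, rfl⟩
    have hx0 : (0:ℝ) < x := hx
    have hA : (0:ℝ) < 1 + x^2 := by positivity
    constructor
    · positivity
    · rw [div_lt_one hA]; nlinarith
  · rintro ⟨hu0, hu1⟩
    have h1u : (0:ℝ) < 1 - u := by linarith
    refine ⟨Real.sqrt (u / (1 - u)), ?_, ?_⟩
    · exact Real.sqrt_pos.mpr (by positivity)
    · have hsq : Real.sqrt (u / (1 - u)) ^ 2 = u / (1 - u) :=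
        Real.sq_sqrt (by positivity)
      show Real.sqrt (u / (1-u)) ^ 2 / (1 + Real.sqrt (u / (1-u)) ^ 2) = u
      rw [hsq]
      field_simp
      ring

lemma inj_aux : Set.InjOn (fun x : ℝ => x^2 / (1 + x^2)) (Set.Ioi 0) := by
  intro x hx y hy h
  simp only [Set.mem_Ioi] at hx hy
  have hAx : (0:ℝ) < 1 + x^2 := by positivity
  have hAy : (0:ℝ) < 1 + y^2 := by positivity
  have hsq : x^2 = y^2 := by
    field_simp at h
    nlinarith
  calc x = Real.sqrt (x^2) := (Real.sqrt_sq hx.le).symm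
    _ = Real.sqrt (y^2) := by rw [hsq]
    _ = y := Real.sqrt_sq hy.le

lemma deriv_aux (x : ℝ) (hx : x ∈ Set.Ioi (0:ℝ)) :
    HasDerivWithinAt (fun x : ℝ => x^2 / (1 + x^2))
      (2 * x / (1 + x^2)^2) (Set.Ioi 0) x := by
  have hA : (0:ℝ) < 1 + x^2 := by positivity
  have h1 : HasDerivAt (fun x : ℝ => x^2) (2 * x) x := by
    simpa using hasDerivAt_pow 2 x
  have h2 : HasDerivAt (fun x : ℝ => 1 + x^2) (2 * x) x := by
    exact h1.const_add 1
  have h : HasDerivAt (fun x : ℝ => x^2 / (1 + x^2)) _ x := h1.div h2 (ne_of_gt hA)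
  apply HasDerivAt.hasDerivWithinAt
  refine h.congr_deriv ?_
  ring

lemma subst_aux {c : ℝ} :
    ∫ u in Set.Ioo (0:ℝ) 1, u ^ ((1:ℝ)/2) * (1-u) ^ (c - 3/2) =
      ∫ x in Set.Ioi (0:ℝ), 2 * (x^2 * (1+x^2) ^ (-(c+1))) := by
  have key := integral_image_eq_integral_abs_deriv_smul measurableSet_Ioi deriv_aux inj_aux
    (fun u : ℝ => u ^ ((1:ℝ)/2) * (1-u) ^ (c - 3/2))
  rw [image_aux] at key
  rw [key]
  apply setIntegral_congr_fun measurableSet_Ioi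
  intro x hx
  have hx0 : (0:ℝ) < x := hx
  have hA : (0:ℝ) < 1 + x^2 := by positivity
  have habs : |2 * x / (1 + x^2)^2| = 2 * x / (1 + x^2)^2 := abs_of_pos (by positivity)
  simp only [smul_eq_mul]
  rw [habs]
  have h1 : (x^2 / (1+x^2)) ^ ((1:ℝ)/2) = x * ((1+x^2) ^ ((1:ℝ)/2))⁻¹ := by
    rw [Real.div_rpow (sq_nonneg x) hA.le]
    rw [show (x^2 : ℝ) = x ^ (2:ℕ) by norm_num, ← Real.rpow_natCast x 2,
      ← Real.rpow_mul hx0.le]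
    norm_num
    rw [div_eq_mul_inv]
  have h2 : 1 - x^2/(1+x^2) = (1+x^2)⁻¹ := by field_simp; ring
  have h3 : ((1+x^2)⁻¹) ^ (c - 3/2) = ((1+x^2) ^ (c-3/2))⁻¹ := Real.inv_rpow hA.le _
  simp only [h2]
  rw [h1, h3]
  have e1 : ((1+x^2) ^ ((1:ℝ)/2))⁻¹ = (1+x^2) ^ (-((1:ℝ)/2)) := (Real.rpow_neg hA.le _).symm
  have e2 : ((1+x^2) ^ (c-3/2))⁻¹ = (1+x^2) ^ (-(c-3/2)) := (Real.rpow_neg hA.le _).symm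
  rw [e1, e2]
  have e3 : ((1+x^2):ℝ)^(2:ℕ) = (1+x^2) ^ ((2:ℕ):ℝ) := (Real.rpow_natCast _ 2).symm
  have e4 : (1+x^2) ^ (-((1:ℝ)/2)) * (1+x^2) ^ (-(c-3/2)) = (1+x^2) ^ (1 - c) := by
    rw [← Real.rpow_add hA]; congr 1; ring
  have e5 : (1+x^2) ^ ((1:ℝ) - c) / (1+x^2) ^ ((2:ℕ):ℝ) = (1+x^2) ^ (-(c+1)) := by
    rw [← Real.rpow_sub hA]; congr 1; push_cast; ring
  calc 2 * x / (1 + x^2)^2 * (x * (1+x^2) ^ (-((1:ℝ)/2)) * (1+x^2) ^ (-(c-3/2)))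
      = 2 * (x^2 * ((1+x^2) ^ (-((1:ℝ)/2)) * (1+x^2) ^ (-(c-3/2)) / (1+x^2)^2)) := by ring
    _ = 2 * (x^2 * (1+x^2) ^ (-(c+1))) := by rw [e4, e3, e5]


lemma beta_real {c : ℝ} (hc : 1/2 < c) :
    Real.Gamma (3/2) * Real.Gamma (c - 1/2) =
      Real.Gamma (c+1) * ∫ u in (0:ℝ)..1, u ^ ((1:ℝ)/2) * (1-u) ^ (c - 3/2) := by
  have hB := Complex.Gamma_mul_Gamma_eq_betaIntegral
    (s := (3/2 : ℂ)) (t := ((c : ℂ) - 1/2)) (by norm_num)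
    (by simp [Complex.sub_re]; norm_num; linarith)
  have hBeq : Complex.betaIntegral (3/2) ((c:ℂ) - 1/2) =
      ((∫ u in (0:ℝ)..1, u ^ ((1:ℝ)/2) * (1-u) ^ (c - 3/2) : ℝ) : ℂ) := by
    rw [Complex.betaIntegral]
    rw [← intervalIntegral.integral_ofReal]
    apply intervalIntegral.integral_congr
    intro x hx
    rw [Set.uIcc_of_le (by norm_num : (0:ℝ) ≤ 1)] at hx
    obtain ⟨hx0, hx1⟩ := hx
    show (x:ℂ) ^ ((3:ℂ)/2 - 1) * (1 - (x:ℂ)) ^ ((c:ℂ) - 1/2 - 1)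
        = (((x:ℝ) ^ ((1:ℝ)/2) * (1-x) ^ (c - 3/2) : ℝ) : ℂ)
    rw [show (1 - (x:ℂ)) = ((1 - x : ℝ) : ℂ) by push_cast; ring,
      show ((3:ℂ)/2 - 1) = (((1:ℝ)/2 : ℝ) : ℂ) by norm_num,
      show ((c:ℂ) - 1/2 - 1) = (((c - 3/2 : ℝ)) : ℂ) by push_cast; ring,
      ← Complex.ofReal_cpow hx0, ← Complex.ofReal_cpow (by linarith : (0:ℝ) ≤ 1 - x)]
    push_cast
    ring
  rw [hBeq] at hB
  rw [show ((3:ℂ)/2 + ((c:ℂ) - 1/2)) = (c:ℂ) + 1 by ring] at hB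
  have h1 : ((3:ℂ)/2) = ((3/2 : ℝ) : ℂ) := by norm_num
  have h2 : ((c:ℂ) - 1/2) = ((c - 1/2 : ℝ) : ℂ) := by push_cast; ring
  have h3 : ((c:ℂ) + 1) = ((c + 1 : ℝ) : ℂ) := by push_cast; ring
  rw [h1, h2, h3, Complex.Gamma_ofReal, Complex.Gamma_ofReal, Complex.Gamma_ofReal] at hB
  exact_mod_cast hB


lemma Gamma_three_halves : Real.Gamma (3/2) = Real.sqrt Real.pi / 2 := by
  have := Real.Gamma_add_one (s := 1/2) (by norm_num)
  rw [show (1:ℝ)/2 + 1 = 3/2 by norm_num, Real.Gamma_one_half_eq] at this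
  rw [this]; ring

lemma beta_int {c : ℝ} (hc : 1/2 < c) :
    ∫ x in Set.Ioi (0:ℝ), x^2 * (1 + x^2) ^ (-(c+1)) =
      Real.sqrt Real.pi / 4 * (Real.Gamma (c - 1/2) / Real.Gamma (c + 1)) := by
  have hioc : (∫ u in (0:ℝ)..1, u ^ ((1:ℝ)/2) * (1-u) ^ (c - 3/2)) =
      ∫ u in Set.Ioo (0:ℝ) 1, u ^ ((1:ℝ)/2) * (1-u) ^ (c - 3/2) := by
    rw [intervalIntegral.integral_of_le (by norm_num : (0:ℝ) ≤ 1),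
      MeasureTheory.integral_Ioc_eq_integral_Ioo]
  have hconst : (∫ x in Set.Ioi (0:ℝ), 2 * (x^2 * (1+x^2) ^ (-(c+1)))) =
      2 * ∫ x in Set.Ioi (0:ℝ), x^2 * (1+x^2) ^ (-(c+1)) :=
    MeasureTheory.integral_const_mul 2 _
  have hg := beta_real hc
  rw [hioc, subst_aux, hconst] at hg
  have hgc : (0:ℝ) < Real.Gamma (c+1) := Real.Gamma_pos_of_pos (by linarith)
  rw [Gamma_three_halves] at hg
  rw [show Real.sqrt Real.pi / 4 * (Real.Gamma (c-1/2) / Real.Gamma (c+1))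
      = (Real.sqrt Real.pi / 2 * Real.Gamma (c-1/2)) / (2 * Real.Gamma (c+1)) by
    rw [div_mul_div_comm, div_eq_div_iff (by positivity) (by positivity)]; ring]
  rw [eq_div_iff (by positivity)]
  linear_combination -hg


lemma my_one_div_le {x : ℝ} (hx : 2 ≤ x) :
    1 / (x * Real.sqrt (x-1)) ≤ Real.sqrt 2 * x ^ (-(3:ℝ)/2) := by
  have hx0 : (0:ℝ) < x := by linarith
  have hx1 : (0:ℝ) < x - 1 := by linarith
  have hsx1 : (0:ℝ) < Real.sqrt (x-1) := Real.sqrt_pos.mpr hx1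
  have hsx : (0:ℝ) < Real.sqrt x := Real.sqrt_pos.mpr hx0
  have hxsq : x ^ ((3:ℝ)/2) = x * Real.sqrt x := by
    rw [show (3:ℝ)/2 = 1 + 1/2 by norm_num, Real.rpow_add hx0, Real.rpow_one,
      ← Real.sqrt_eq_rpow]
  have hneg : x ^ (-(3:ℝ)/2) = (x * Real.sqrt x)⁻¹ := by
    rw [show (-(3:ℝ)/2) = -((3:ℝ)/2) by norm_num, Real.rpow_neg hx0.le, hxsq]
  rw [hneg, ← one_div, mul_one_div, div_le_div_iff₀ (by positivity) (by positivity)]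
  have hs1 : Real.sqrt x ≤ Real.sqrt 2 * Real.sqrt (x - 1) := by
    rw [← Real.sqrt_mul (by norm_num)]
    exact Real.sqrt_le_sqrt (by linarith)
  nlinarith [mul_le_mul_of_nonneg_left hs1 hx0.le]

lemma rpow_neg_mono {a b : ℝ} (ha : 0 < a) (hab : a ≤ b) :
    b ^ (-(3:ℝ)/2) ≤ a ^ (-(3:ℝ)/2) := by
  rw [show (-(3:ℝ)/2) = -((3:ℝ)/2) by norm_num, Real.rpow_neg (by linarith),
    Real.rpow_neg ha.le]
  exact inv_anti₀ (Real.rpow_pos_of_pos ha _)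
    (Real.rpow_le_rpow ha.le hab (by norm_num))

lemma ratio_le {L : ℝ} (hL : 2 ≤ L) (n : ℕ) :
    Real.Gamma (L * ((n:ℝ)+1) - 1/2) / Real.Gamma (L * ((n:ℝ)+1) + 1) ≤
      Real.sqrt 2 * ((n:ℝ)+1) ^ (-(3:ℝ)/2) := by
  set x : ℝ := L * ((n:ℝ)+1) with hxdef
  have hn1 : (1:ℝ) ≤ (n:ℝ)+1 := by have := Nat.cast_nonneg (α := ℝ) n; linarith
  have hx2 : (2:ℝ) ≤ x := by
    calc (2:ℝ) = 2 * 1 := by ring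
      _ ≤ L * ((n:ℝ)+1) := mul_le_mul hL hn1 zero_le_one (by linarith)
  have hxn : ((n:ℝ)+1) ≤ x := by
    calc ((n:ℝ)+1) = 1 * ((n:ℝ)+1) := (one_mul _).symm
      _ ≤ L * ((n:ℝ)+1) := mul_le_mul_of_nonneg_right (by linarith) (by positivity)
  calc Real.Gamma (x - 1/2) / Real.Gamma (x + 1)
      ≤ 1 / (x * Real.sqrt (x-1)) := gamma_ratio_upper (by linarith)
    _ ≤ Real.sqrt 2 * x ^ (-(3:ℝ)/2) := my_one_div_le hx2
    _ ≤ Real.sqrt 2 * ((n:ℝ)+1) ^ (-(3:ℝ)/2) :=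
        mul_le_mul_of_nonneg_left (rpow_neg_mono (by positivity) hxn) (Real.sqrt_nonneg 2)

lemma ratio_nonneg {L : ℝ} (hL : 2 ≤ L) (n : ℕ) :
    0 ≤ Real.Gamma (L * ((n:ℝ)+1) - 1/2) / Real.Gamma (L * ((n:ℝ)+1) + 1) := by
  have hn1 : (1:ℝ) ≤ (n:ℝ)+1 := by have := Nat.cast_nonneg (α := ℝ) n; linarith
  have hx2 : (2:ℝ) ≤ L * ((n:ℝ)+1) := by
    calc (2:ℝ) = 2 * 1 := by ring
      _ ≤ L * ((n:ℝ)+1) := mul_le_mul hL hn1 zero_le_one (by linarith)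
  have h1 := Real.Gamma_pos_of_pos (show (0:ℝ) < L * ((n:ℝ)+1) - 1/2 by linarith)
  have h2 := Real.Gamma_pos_of_pos (show (0:ℝ) < L * ((n:ℝ)+1) + 1 by linarith)
  positivity

lemma ratio_summable {L : ℝ} (hL : 2 ≤ L) :
    Summable (fun n : ℕ =>
      Real.Gamma (L * ((n:ℝ)+1) - 1/2) / Real.Gamma (L * ((n:ℝ)+1) + 1)) :=
  Summable.of_nonneg_of_le (ratio_nonneg hL) (ratio_le hL) (summable_aux.mul_left _)

lemma f_integrable {c : ℝ} (hc : 1 ≤ c) :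
    IntegrableOn (fun x : ℝ => x^2 * (1+x^2) ^ (-(c+1))) (Set.Ioi 0) := by
  have hcont : Continuous (fun x : ℝ => x^2 * (1+x^2) ^ (-(c+1))) := by
    apply (continuous_pow 2).mul
    apply Continuous.rpow_const (continuous_const.add (continuous_pow 2))
    intro x; left; exact ne_of_gt (by positivity : (0:ℝ) < 1 + x^2)
  apply Integrable.mono (integrable_inv_one_add_sq.restrict (s := Set.Ioi 0))
    hcont.aestronglyMeasurable
  apply MeasureTheory.ae_of_all
  intro x
  have hA : (0:ℝ) < 1 + x^2 := by positivity
  have hA1 : (1:ℝ) ≤ 1 + x^2 := by nlinarith [sq_nonneg x]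
  rw [Real.norm_eq_abs, Real.norm_eq_abs, abs_of_nonneg (by positivity),
    abs_of_nonneg (by positivity)]
  calc x^2 * (1+x^2) ^ (-(c+1)) ≤ (1+x^2) * (1+x^2) ^ (-(c+1)) := by
        apply mul_le_mul_of_nonneg_right (by nlinarith [sq_nonneg x]) (by positivity)
    _ = (1+x^2) ^ (-c) := by
        have h := Real.rpow_add hA 1 (-(c+1))
        rw [Real.rpow_one] at h
        rw [← h]
        congr 1
        ring
    _ ≤ (1+x^2) ^ (-(1:ℝ)) := Real.rpow_le_rpow_of_exponent_le hA1 (by linarith)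
    _ = (1+x^2)⁻¹ := by rw [Real.rpow_neg_one]

lemma geom_pointwise {L x : ℝ} (hL : 2 ≤ L) (hx : 0 < x) :
    1 / ((1 + x^2) ^ L - 1) * (x^2 / (1 + x^2)) =
      ∑' n : ℕ, x^2 * (1+x^2) ^ (-(L * ((n:ℝ)+1) + 1)) := by
  have hA : (0:ℝ) < 1 + x^2 := by positivity
  have hA1 : (1:ℝ) < 1 + x^2 := by nlinarith
  have hAL : (1:ℝ) < (1+x^2) ^ L := by
    exact (Real.one_lt_rpow_iff_of_pos hA).mpr (Or.inl ⟨hA1, by linarith⟩)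
  set r : ℝ := (1+x^2) ^ (-L) with hr
  have hr0 : 0 < r := Real.rpow_pos_of_pos hA _
  have hrinv : r = ((1+x^2) ^ L)⁻¹ := by rw [hr, Real.rpow_neg hA.le]
  have hr1 : r < 1 := by
    rw [hrinv]
    exact inv_lt_one_of_one_lt₀ hAL
  have hterm : ∀ n : ℕ, x^2 * (1+x^2) ^ (-(L * ((n:ℝ)+1) + 1)) =
      (x^2 / (1+x^2)) * r ^ (n+1) := by
    intro n
    have h1 : (-(L * ((n:ℝ)+1) + 1)) = (-L) * ((n:ℝ)+1) + (-1) := by ring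
    rw [h1, Real.rpow_add hA, Real.rpow_neg_one]
    have h2 : (1+x^2) ^ ((-L) * ((n:ℝ)+1)) = r ^ (n+1) := by
      rw [Real.rpow_mul hA.le, ← Real.rpow_natCast ((1+x^2) ^ (-L)) (n+1)]
      push_cast
      rfl
    rw [h2]
    ring
  rw [tsum_congr hterm, tsum_mul_left]
  have hgeo : ∑' n : ℕ, r ^ (n+1) = r / (1 - r) := by
    have h := tsum_geometric_of_lt_one hr0.le hr1
    calc ∑' n : ℕ, r ^ (n+1) = ∑' n : ℕ, r^n * r := by
          apply tsum_congr; intro n; rw [pow_succ]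
      _ = (∑' n : ℕ, r^n) * r := tsum_mul_right
      _ = (1-r)⁻¹ * r := by rw [h]
      _ = r / (1-r) := by rw [div_eq_mul_inv]; ring
  rw [hgeo]
  have hne1 : (1+x^2) ^ L ≠ 0 := by positivity
  have hne2 : (1+x^2) ^ L - 1 ≠ 0 := by linarith
  have hne3 : 1 - r ≠ 0 := by linarith
  rw [hrinv]
  field_simp

lemma integral_eq_sum {L : ℝ} (hL : 2 ≤ L) :
    (∫ x in Set.Ioi (0:ℝ), 1 / ((1 + x^2) ^ L - 1) * (x^2 / (1 + x^2))) =
      Real.sqrt Real.pi / 4 *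
        ∑' n : ℕ, Real.Gamma (L * ((n:ℝ) + 1) - 1/2) / Real.Gamma (L * ((n:ℝ) + 1) + 1) := by
  set F : ℕ → ℝ → ℝ := fun n x => x^2 * (1+x^2) ^ (-(L * ((n:ℝ)+1) + 1)) with hF
  have hc : ∀ n : ℕ, (1:ℝ) ≤ L * ((n:ℝ)+1) := by
    intro n
    have hn1 : (1:ℝ) ≤ (n:ℝ)+1 := by have := Nat.cast_nonneg (α := ℝ) n; linarith
    calc (1:ℝ) = 1 * 1 := by ring
      _ ≤ L * ((n:ℝ)+1) := mul_le_mul (by linarith) hn1 zero_le_one (by linarith)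
  have hint : ∀ n : ℕ, IntegrableOn (F n) (Set.Ioi 0) := fun n => f_integrable (hc n)
  have hval : ∀ n : ℕ, (∫ x in Set.Ioi (0:ℝ), F n x) =
      Real.sqrt Real.pi / 4 *
        (Real.Gamma (L * ((n:ℝ)+1) - 1/2) / Real.Gamma (L * ((n:ℝ)+1) + 1)) :=
    fun n => beta_int (by linarith [hc n])
  have hnorm : ∀ n : ℕ, (∫ x in Set.Ioi (0:ℝ), ‖F n x‖) = ∫ x in Set.Ioi (0:ℝ), F n x := by
    intro n
    have : (fun x => ‖F n x‖) = F n := by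
      funext x
      rw [Real.norm_eq_abs, abs_of_nonneg (by positivity)]
    rw [this]
  have hsum : Summable fun n : ℕ => ∫ x in Set.Ioi (0:ℝ), ‖F n x‖ := by
    have heq : (fun n : ℕ => ∫ x in Set.Ioi (0:ℝ), ‖F n x‖) =
        fun n : ℕ => Real.sqrt Real.pi / 4 *
          (Real.Gamma (L * ((n:ℝ)+1) - 1/2) / Real.Gamma (L * ((n:ℝ)+1) + 1)) :=
      funext fun n => (hnorm n).trans (hval n)
    rw [heq]
    exact (ratio_summable hL).mul_left _
  have hswap := MeasureTheory.integral_tsum_of_summable_integral_norm hint hsum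
  have hcong : (∫ x in Set.Ioi (0:ℝ), 1 / ((1 + x^2) ^ L - 1) * (x^2 / (1 + x^2))) =
      ∫ x in Set.Ioi (0:ℝ), ∑' n : ℕ, F n x := by
    apply setIntegral_congr_fun measurableSet_Ioi
    intro x hx
    exact geom_pointwise hL hx
  rw [hcong, ← hswap, tsum_congr hval, tsum_mul_left]

end LimitAux

theorem limit_sum_integral_large_L (z : ℝ) (hz : (z : ℂ) = riemannZeta (3/2)) :
    Tendsto (fun L : ℝ => L ^ ((3:ℝ)/2) *
        ∑' n : ℕ, Real.Gamma (L * (n + 1) - 1/2) / Real.Gamma (L * (n + 1) + 1))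
      atTop (nhds z) ∧
    Tendsto (fun L : ℝ => L ^ ((3:ℝ)/2) *
        ∫ x in Set.Ioi (0:ℝ), 1 / ((1 + x^2) ^ L - 1) * (x^2 / (1 + x^2)))
      atTop (nhds (Real.sqrt Real.pi / 4 * z)) := by
  refine ⟨LimitAux.part1' z hz, ?_⟩
  have h2 := (LimitAux.part1' z hz).const_mul (Real.sqrt Real.pi / 4)
  apply h2.congr'
  filter_upwards [eventually_ge_atTop (2:ℝ)] with L hL
  rw [LimitAux.integral_eq_sum hL]
  ring
end

section
/- There exist constants C > 0 and δ > 0 such that for all L ∈ (1/2, 1/2 + δ), |(√π/2) Σ_{n=1}^∞ Γ(Ln − 1/2)/Γ(Ln + 1) − 1/(L − 1/2)| ≤ C; that is, (√π/2) Σ_{n=1}^∞ Γ(Ln − 1/2)/Γ(Ln + 1) = 1/(L − 1/2) + O(1) as L → 1/2⁺. -/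
open Real Filter Set

private lemma gautschi {x : ℝ} (hx : 0 < x) :
    Real.Gamma x / Real.Gamma (x + 3/2) ≤ x ^ (-(3/2) : ℝ) := by
  have hA : 0 < Real.Gamma x := Real.Gamma_pos_of_pos hx
  have hB : 0 < Real.Gamma (x + 3/2) := Real.Gamma_pos_of_pos (by linarith)
  have hconv := Real.convexOn_log_Gamma.2 (Set.mem_Ioi.mpr hx)
    (Set.mem_Ioi.mpr (show (0:ℝ) < x + 3/2 by linarith))
    (by norm_num : (0:ℝ) ≤ 1/3) (by norm_num : (0:ℝ) ≤ 2/3) (by norm_num)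
  have harg : (1/3 : ℝ) • x + (2/3 : ℝ) • (x + 3/2) = x + 1 := by
    simp [smul_eq_mul]; ring
  rw [harg] at hconv
  simp only [Function.comp_apply, smul_eq_mul] at hconv
  have key : x * Real.Gamma x ≤ Real.Gamma x ^ ((1:ℝ)/3) * Real.Gamma (x + 3/2) ^ ((2:ℝ)/3) := by
    have h1 : Real.Gamma (x + 1) ≤ Real.Gamma x ^ ((1:ℝ)/3) * Real.Gamma (x + 3/2) ^ ((2:ℝ)/3) := by
      have h2 := Real.exp_le_exp.mpr hconv
      rw [Real.exp_log (Real.Gamma_pos_of_pos (by linarith)), Real.exp_add] at h2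
      rw [Real.rpow_def_of_pos hA, Real.rpow_def_of_pos hB, mul_comm (Real.log _),
        mul_comm (Real.log _)]
      exact h2
    rwa [Real.Gamma_add_one hx.ne'] at h1
  have key2 : x * Real.Gamma x ^ ((2:ℝ)/3) ≤ Real.Gamma (x + 3/2) ^ ((2:ℝ)/3) := by
    have hpos : 0 < Real.Gamma x ^ ((1:ℝ)/3) := Real.rpow_pos_of_pos hA _
    calc x * Real.Gamma x ^ ((2:ℝ)/3)
        = (x * Real.Gamma x) / Real.Gamma x ^ ((1:ℝ)/3) := by
          rw [eq_div_iff hpos.ne', mul_assoc, ← Real.rpow_add hA]; norm_num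
      _ ≤ (Real.Gamma x ^ ((1:ℝ)/3) * Real.Gamma (x + 3/2) ^ ((2:ℝ)/3)) / Real.Gamma x ^ ((1:ℝ)/3) := by
          gcongr
      _ = Real.Gamma (x + 3/2) ^ ((2:ℝ)/3) := by field_simp
  have key3 : x ^ ((3:ℝ)/2) * Real.Gamma x ≤ Real.Gamma (x + 3/2) := by
    have h3 := Real.rpow_le_rpow (by positivity) key2 (by norm_num : (0:ℝ) ≤ 3/2)
    rw [Real.mul_rpow hx.le (by positivity), ← Real.rpow_mul hA.le, ← Real.rpow_mul hB.le] at h3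
    norm_num at h3
    exact h3
  rw [div_le_iff₀ hB, Real.rpow_neg hx.le, inv_mul_eq_div, le_div_iff₀ (Real.rpow_pos_of_pos hx _),
    mul_comm]
  exact key3

private lemma tail_term_le {L : ℝ} (hL : 1/2 < L) (n : ℕ) :
    Real.Gamma (L * ((n:ℝ) + 2) - 1/2) / Real.Gamma (L * ((n:ℝ) + 2) + 1)
      ≤ (((n:ℝ) + 1)/2) ^ (-(3/2) : ℝ) := by
  have hx : (((n:ℝ)+1)/2) ≤ L * ((n:ℝ)+2) - 1/2 := by
    have : (0:ℝ) ≤ n := Nat.cast_nonneg n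
    nlinarith
  have hx0 : (0:ℝ) < ((n:ℝ)+1)/2 := by positivity
  have h1 : Real.Gamma (L * ((n:ℝ) + 2) - 1/2) / Real.Gamma ((L * ((n:ℝ) + 2) - 1/2) + 3/2)
      ≤ (L * ((n:ℝ)+2) - 1/2) ^ (-(3/2) : ℝ) := gautschi (lt_of_lt_of_le hx0 hx)
  have h2 : (L * ((n:ℝ)+2) - 1/2) ^ (-(3/2):ℝ) ≤ (((n:ℝ)+1)/2) ^ (-(3/2):ℝ) :=
    Real.rpow_le_rpow_of_nonpos hx0 hx (by norm_num)
  calc Real.Gamma (L * ((n:ℝ) + 2) - 1/2) / Real.Gamma (L * ((n:ℝ) + 2) + 1)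
      = Real.Gamma (L * ((n:ℝ) + 2) - 1/2) / Real.Gamma ((L * ((n:ℝ) + 2) - 1/2) + 3/2) := by
        ring_nf
    _ ≤ _ := h1.trans h2

private lemma maj_summable : Summable (fun n : ℕ => (((n:ℝ) + 1)/2) ^ (-(3/2) : ℝ)) := by
  have h1 : Summable (fun n : ℕ => ((n:ℝ)) ^ (-(3/2) : ℝ)) :=
    Real.summable_nat_rpow.mpr (by norm_num)
  have h2 := (summable_nat_add_iff 1).mpr h1
  apply h2.mul_left ((2:ℝ) ^ ((3:ℝ)/2)) |>.congr
  intro n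
  rw [Real.div_rpow (by positivity) (by norm_num), Real.rpow_neg (by norm_num : (0:ℝ) ≤ 2)]
  push_cast
  field_simp

private noncomputable def gfun : ℝ → ℝ :=
  fun L => Real.sqrt Real.pi / 2 * (Real.Gamma (L + 1/2) / Real.Gamma (L + 1))

private lemma gfun_half : gfun (1/2) = 1 := by
  have h32 : Real.Gamma (3/2 : ℝ) = Real.sqrt Real.pi / 2 := by
    have := Real.Gamma_add_one (by norm_num : (1/2:ℝ) ≠ 0)
    rw [Real.Gamma_one_half_eq] at this
    norm_num at this ⊢
    rw [this]; ring
  have h1 : ((1:ℝ)/2 + 1/2) = 1 := by norm_num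
  rw [gfun, h1]
  norm_num [Real.Gamma_one, h32]
  have hpi : Real.sqrt Real.pi ≠ 0 := by positivity
  field_simp

private lemma gfun_diff : DifferentiableAt ℝ gfun (1/2) := by
  have hne : ∀ m : ℕ, ((1:ℝ)/2 + 1/2) ≠ -m := by
    intro m
    have : (0:ℝ) ≤ m := Nat.cast_nonneg m
    norm_num; linarith
  have hne2 : ∀ m : ℕ, ((1:ℝ)/2 + 1) ≠ -m := by
    intro m
    have : (0:ℝ) ≤ m := Nat.cast_nonneg m
    norm_num; linarith
  have h1 : DifferentiableAt ℝ (fun L : ℝ => Real.Gamma (L + 1/2)) (1/2) :=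
    DifferentiableAt.comp (f := fun L : ℝ => L + 1/2) (1/2)
      (Real.differentiableAt_Gamma hne) (differentiableAt_id.add_const _)
  have h2 : DifferentiableAt ℝ (fun L : ℝ => Real.Gamma (L + 1)) (1/2) :=
    DifferentiableAt.comp (f := fun L : ℝ => L + 1) (1/2)
      (Real.differentiableAt_Gamma hne2) (differentiableAt_id.add_const _)
  have h3 : Real.Gamma ((1:ℝ)/2 + 1) ≠ 0 :=
    (Real.Gamma_pos_of_pos (by norm_num)).ne'
  exact (h1.div h2 h3).const_mul _

private lemma slope_bound : ∃ δ > (0:ℝ), ∀ L : ℝ, 1/2 < L → L < 1/2 + δ →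
    |(gfun L - 1) / (L - 1/2)| ≤ |deriv gfun (1/2)| + 1 := by
  have hd := gfun_diff.hasDerivAt
  have hs := hasDerivAt_iff_tendsto_slope.mp hd
  have hs2 : Tendsto (slope gfun (1/2)) (nhdsWithin (1/2) (Ioi (1/2))) (nhds (deriv gfun (1/2))) :=
    hs.mono_left (nhdsWithin_mono _ (fun x hx => ne_of_gt hx))
  have habs : Tendsto (fun L => |slope gfun (1/2) L|) (nhdsWithin (1/2) (Ioi (1/2)))
      (nhds |deriv gfun (1/2)|) := hs2.abs
  have hev : ∀ᶠ L in nhdsWithin (1/2) (Ioi (1/2)),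
      |slope gfun (1/2) L| < |deriv gfun (1/2)| + 1 :=
    habs.eventually_lt_const (by linarith [abs_nonneg (deriv gfun (1/2))])
  rw [eventually_iff, mem_nhdsGT_iff_exists_Ioo_subset] at hev
  obtain ⟨u, hu, hsub⟩ := hev
  refine ⟨u - 1/2, by simpa using hu, fun L hL1 hL2 => ?_⟩
  have hmem : L ∈ Ioo (1/2 : ℝ) u := ⟨hL1, by linarith⟩
  have h4 := hsub hmem
  simp only [mem_setOf_eq, slope_def_field] at h4
  have heq : (gfun L - 1) / (L - 1/2) = (gfun L - gfun (1/2)) / (L - 1/2) := by rw [gfun_half]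
  rw [heq]
  exact le_of_lt (by simpa [div_eq_mul_inv] using h4)

theorem sum_near_half_plus :
    ∃ C > (0:ℝ), ∃ δ > (0:ℝ), ∀ L : ℝ, 1/2 < L → L < 1/2 + δ →
      |Real.sqrt Real.pi / 2 *
          (∑' n : ℕ, Real.Gamma (L * (n + 1) - 1/2) / Real.Gamma (L * (n + 1) + 1)) -
        1 / (L - 1/2)| ≤ C := by
  set T : ℝ := ∑' n : ℕ, (((n:ℝ) + 1)/2) ^ (-(3/2) : ℝ) with hT
  have hT0 : 0 ≤ T := tsum_nonneg (fun n => Real.rpow_nonneg (by positivity) _)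
  have hpi0 : (0:ℝ) ≤ Real.sqrt Real.pi / 2 := by positivity
  obtain ⟨δ, hδ, hslope⟩ := slope_bound
  refine ⟨|deriv gfun (1/2)| + 1 + Real.sqrt Real.pi / 2 * T, by positivity, δ, hδ,
    fun L hL1 hL2 => ?_⟩
  set f : ℕ → ℝ := fun n => Real.Gamma (L * ((n:ℝ) + 1) - 1/2) / Real.Gamma (L * ((n:ℝ) + 1) + 1)
    with hf
  have hLpos : 0 < L := by linarith
  have harg_pos : ∀ n : ℕ, 0 < L * ((n:ℝ) + 1) - 1/2 := by
    intro n
    have h1 : (0:ℝ) ≤ n := Nat.cast_nonneg n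
    nlinarith
  have hfpos : ∀ n : ℕ, 0 ≤ f n := by
    intro n
    exact le_of_lt (div_pos (Real.Gamma_pos_of_pos (harg_pos n))
      (Real.Gamma_pos_of_pos (by nlinarith [harg_pos n])))
  have hshift_le : ∀ n : ℕ, f (n + 1) ≤ (((n:ℝ) + 1)/2) ^ (-(3/2) : ℝ) := by
    intro n
    have := tail_term_le hL1 n
    simp only [hf]
    push_cast
    convert this using 4 <;> ring
  have hsum1 : Summable (fun n : ℕ => f (n + 1)) :=
    Summable.of_nonneg_of_le (fun n => hfpos _) hshift_le maj_summable
  have hsum : Summable f := (summable_nat_add_iff 1).mp hsum1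
  have htsum : ∑' n, f n = f 0 + ∑' n, f (n + 1) := Summable.tsum_eq_zero_add hsum
  have htail_le : ∑' n, f (n + 1) ≤ T := Summable.tsum_le_tsum hshift_le hsum1 maj_summable
  have htail0 : 0 ≤ ∑' n, f (n + 1) := tsum_nonneg (fun n => hfpos _)
  have hLne : L - 1/2 ≠ 0 := by intro h; linarith [hL1, sub_eq_zero.mp h]
  have hGne : Real.Gamma (L + 1) ≠ 0 := (Real.Gamma_pos_of_pos (by linarith)).ne'
  have hf0 : f 0 = Real.Gamma (L + 1/2) / (L - 1/2) / Real.Gamma (L + 1) := by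
    have hrec : Real.Gamma (L + 1/2) = (L - 1/2) * Real.Gamma (L - 1/2) := by
      have := Real.Gamma_add_one (show L - 1/2 ≠ 0 from hLne)
      rw [show L - 1/2 + 1 = L + 1/2 by ring] at this
      exact this
    simp only [hf]
    rw [hrec]
    norm_num
    field_simp
    have h2 : (L * 2 - 1) ≠ 0 := by intro h; apply hLne; linarith
    rw [mul_div_cancel_left₀ _ h2]
  have hterm0 : Real.sqrt Real.pi / 2 * f 0 - 1 / (L - 1/2) = (gfun L - 1) / (L - 1/2) := by
    rw [hf0, gfun]
    rw [show Real.sqrt Real.pi / 2 * (Real.Gamma (L + 1/2) / (L - 1/2) / Real.Gamma (L + 1))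
        = (Real.sqrt Real.pi / 2 * (Real.Gamma (L + 1/2) / Real.Gamma (L + 1))) / (L - 1/2) from by
      ring, div_sub_div_same]
  have key : Real.sqrt Real.pi / 2 * (∑' n, f n) - 1 / (L - 1/2)
      = (gfun L - 1) / (L - 1/2) + Real.sqrt Real.pi / 2 * ∑' n, f (n + 1) := by
    rw [htsum, ← hterm0]; ring
  calc |Real.sqrt Real.pi / 2 * (∑' n, f n) - 1 / (L - 1/2)|
      = |(gfun L - 1) / (L - 1/2) + Real.sqrt Real.pi / 2 * ∑' n, f (n + 1)| := by rw [key]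
    _ ≤ |(gfun L - 1) / (L - 1/2)| + |Real.sqrt Real.pi / 2 * ∑' n, f (n + 1)| := abs_add_le _ _
    _ ≤ (|deriv gfun (1/2)| + 1) + Real.sqrt Real.pi / 2 * T := by
        gcongr ?_ + ?_
        · exact hslope L hL1 hL2
        · rw [abs_of_nonneg (by positivity)]
          gcongr
    _ = _ := rfl
end
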